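/- arXiv:1307.6316 — 8 statements merged into one kernel-verified Lean document; each statement's English description precedes it below -/
import Mathlib

section
/- If A is a finite d-dimensional subset of ℝ^d (i.e., A is not contained in any affine hyperplane), then |A + A| ≥ (d+1)|A| - d(d+1)/2. -/
/-! Order `ℝ^d` lexicographically, a total order compatible with addition, and remove the largest
element `v` of `A`, leaving `A'`. Call `v + a` (`a ∈ A`) new if it is not in `A' + A'`; new sums
add to `|A' + A'|`. If `v` lies outside the affine span of `A'`, every `v + a` is new
(`v + a = b + c` would put `v = b + c - a` in that span) and the dimension drops by one.
Otherwise the `a` with `v + a` new still span the affine hull of `A`: if `v + a = b + c` with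
`b, c ∈ A'`, then `b, c > a` because `b, c < v`, and `a = b + c - v`, so downward induction
applies; hence at least `dim + 1` sums are new. -/

open Finset Pointwise Module

section Affine

variable {k V : Type*} [DivisionRing k] [AddCommGroup V] [Module k V]

theorem AffineSubspace.add_sub_mem {s : AffineSubspace k V} {a b c : V} (ha : a ∈ s) (hb : b ∈ s)
    (hc : c ∈ s) : a + b - c ∈ s := by
  have h := AffineSubspace.vadd_mem_of_mem_direction (AffineSubspace.vsub_mem_direction ha hc) hb
  rwa [vsub_eq_sub, vadd_eq_add, sub_add_eq_add_sub] at h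

theorem Finset.finrank_vectorSpan_add_one_le_card (s : Finset V) (hs : s.Nonempty) :
    finrank k (vectorSpan k (s : Set V)) + 1 ≤ #s := by
  classical
  obtain ⟨n, hn⟩ := Nat.exists_eq_add_one.2 hs.card_pos
  have h := finrank_vectorSpan_image_finset_le k id s hn
  rw [image_id] at h
  omega

theorem finrank_vectorSpan_insert_of_notMem_affineSpan {s : Set V} (hs : s.Finite)
    (hne : s.Nonempty) {v : V} (hv : v ∉ affineSpan k s) :
    finrank k (vectorSpan k (insert v s)) = finrank k (vectorSpan k s) + 1 := by
  have : FiniteDimensional k (vectorSpan k (insert v s)) :=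
    finiteDimensional_vectorSpan_of_finite k (hs.insert v)
  have hlt : vectorSpan k s < vectorSpan k (insert v s) := by
    refine (vectorSpan_mono k (Set.subset_insert v s)).lt_of_ne fun heq => hv ?_
    rw [← direction_affineSpan, ← direction_affineSpan k (insert v s)] at heq
    rw [AffineSubspace.eq_of_direction_eq_of_nonempty_of_le heq ((affineSpan_nonempty k).2 hne)
      (affineSpan_mono k (Set.subset_insert v s))]
    exact mem_affineSpan k (Set.mem_insert v s)
  have := Submodule.finrank_lt_finrank_of_lt hlt
  have := finrank_vectorSpan_insert_le_set k s v
  omega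

end Affine

section Sumset

variable {V : Type*} [AddCommGroup V] [DecidableEq V]

theorem Finset.card_add_add_card_le_card_add {A B G : Finset V} {v : V} (hv : v ∈ A) (hB : B ⊆ A)
    (hG : G ⊆ A) (hGB : ∀ a ∈ G, v + a ∉ B + B) : #(B + B) + #G ≤ #(A + A) := by
  have hdisj : Disjoint (B + B) (G.image (v + ·)) := by
    simp only [disjoint_right, mem_image]
    rintro _ ⟨a, ha, rfl⟩
    exact hGB a ha
  rw [← card_image_of_injective G (add_right_injective v), ← card_union_of_disjoint hdisj]
  refine card_le_card (union_subset (add_subset_add hB hB) ?_)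
  simp only [subset_iff, mem_image]
  rintro _ ⟨a, ha, rfl⟩
  exact add_mem_add hv (hG ha)

end Sumset

section Ordered

variable {k V : Type*} [DivisionRing k] [AddCommGroup V] [LinearOrder V] [IsOrderedAddMonoid V]
  [Module k V] {s : Finset V} {v : V}

theorem lt_of_add_eq_add_of_lt {a b c : V} (h : v + a = b + c) (hc : c < v) : a < b := by
  by_contra! hb
  exact (add_lt_add_of_le_of_lt hb hc).ne' (by rw [add_comm a, h])

variable [DecidableEq V]

theorem add_self_notMem_add_of_forall_lt (hs : ∀ x ∈ s, x < v) : v + v ∉ s + s := by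
  simp only [mem_add, not_exists, not_and]
  intro b hb c hc h
  exact (add_lt_add (hs b hb) (hs c hc)).ne h

theorem subset_affineSpan_filter_add_notMem (hs : ∀ x ∈ s, x < v) :
    ((insert v s : Finset V) : Set V) ⊆
      affineSpan k ((insert v s).filter (fun a => v + a ∉ s + s) : Set V) := by
  classical
  set G := (insert v s).filter (fun a => v + a ∉ s + s)
  by_contra hsub
  obtain ⟨a, haB, hmax⟩ : ∃ a ∈ (insert v s).filter (· ∉ affineSpan k (G : Set V)),
      ∀ x ∈ (insert v s).filter (· ∉ affineSpan k (G : Set V)), x ≤ a := by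
    obtain ⟨x, hx, hx'⟩ := Set.not_subset.1 hsub
    exact exists_max_image _ id ⟨x, mem_filter.2 ⟨hx, hx'⟩⟩
  rw [mem_filter] at haB
  have hmemG : ∀ x ∈ G, x ∈ affineSpan k (G : Set V) := fun x hx => mem_affineSpan k hx
  have haG : a ∉ G := fun h => haB.2 (hmemG a h)
  obtain ⟨b, hb, c, hc, hbc⟩ := mem_add.1 (by simpa [G, haB.1] using haG)
  have hspan : ∀ x ∈ s, a < x → x ∈ affineSpan k (G : Set V) := fun x hx hax => by
    by_contra hx'
    exact (hmax x (mem_filter.2 ⟨mem_insert_of_mem hx, hx'⟩)).not_gt hax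
  have hvG : v ∈ G := mem_filter.2 ⟨mem_insert_self v s, add_self_notMem_add_of_forall_lt hs⟩
  have ha : a = b + c - v := by rw [hbc, add_sub_cancel_left]
  refine haB.2 (ha ▸ AffineSubspace.add_sub_mem ?_ ?_ (hmemG v hvG))
  · exact hspan b hb (lt_of_add_eq_add_of_lt hbc.symm (hs c hc))
  · exact hspan c hc (lt_of_add_eq_add_of_lt ((add_comm c b).trans hbc).symm (hs b hb))

theorem add_notMem_add_of_notMem_affineSpan (hs : ∀ x ∈ s, x < v)
    (hv : v ∉ affineSpan k (s : Set V)) : ∀ a ∈ insert v s, v + a ∉ s + s := by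
  intro a ha hmem
  rcases mem_insert.1 ha with rfl | ha
  · exact add_self_notMem_add_of_forall_lt hs hmem
  obtain ⟨b, hb, c, hc, hbc⟩ := mem_add.1 hmem
  have hv' : v = b + c - a := by rw [hbc, add_sub_cancel_right]
  exact hv (hv' ▸ AffineSubspace.add_sub_mem (mem_affineSpan k hb) (mem_affineSpan k hc)
    (mem_affineSpan k ha))

theorem finrank_vectorSpan_add_one_le_card_filter_add_notMem (hs : ∀ x ∈ s, x < v) :
    finrank k (vectorSpan k ((insert v s : Finset V) : Set V)) + 1 ≤
      #((insert v s).filter fun a => v + a ∉ s + s) := by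
  set G := (insert v s).filter fun a => v + a ∉ s + s
  have hspan : affineSpan k (G : Set V) = affineSpan k ((insert v s : Finset V) : Set V) :=
    le_antisymm (affineSpan_mono k (coe_subset.2 (filter_subset _ _)))
      (affineSpan_le.2 (subset_affineSpan_filter_add_notMem hs))
  have hvG : v ∈ G := mem_filter.2 ⟨mem_insert_self v s, add_self_notMem_add_of_forall_lt hs⟩
  rw [← direction_affineSpan, ← hspan, direction_affineSpan]
  exact G.finrank_vectorSpan_add_one_le_card ⟨v, hvG⟩

theorem freiman_le_card_add_self (A : Finset V) {r : ℕ}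
    (hr : finrank k (vectorSpan k (A : Set V)) = r) :
    (r + 1 : ℤ) * #A - r * (r + 1) / 2 ≤ #(A + A) := by
  induction A using Finset.induction_on_max generalizing r with
  | empty =>
    rw [← hr, coe_empty, vectorSpan_empty]
    simp
  | insert v s hs ih =>
    rcases s.eq_empty_or_nonempty with rfl | hne
    · rw [← hr, insert_empty, coe_singleton, vectorSpan_singleton]
      simp
    have hcard : #(insert v s) = #s + 1 := card_insert_of_notMem fun h => (hs v h).false
    by_cases hv : v ∈ affineSpan k (s : Set V)
    · have hrs : finrank k (vectorSpan k (s : Set V)) = r := by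
        rw [← hr, coe_insert, ← direction_affineSpan, ← direction_affineSpan,
          affineSpan_insert_eq_affineSpan k hv]
      have hG := finrank_vectorSpan_add_one_le_card_filter_add_notMem (k := k) hs
      have hsum := card_add_add_card_le_card_add (mem_insert_self v s) (subset_insert v s)
        (filter_subset _ _) fun a ha => (mem_filter.1 ha).2
      have := ih hrs
      rw [hr] at hG
      rw [hcard]
      push_cast
      linarith
    · set r' := finrank k (vectorSpan k (s : Set V))
      obtain rfl : r = r' + 1 := by
        rw [← hr, coe_insert, finrank_vectorSpan_insert_of_notMem_affineSpan s.finite_toSet hne hv]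
      have hsum := card_add_add_card_le_card_add (mem_insert_self v s) (subset_insert v s)
        subset_rfl (add_notMem_add_of_notMem_affineSpan hs hv)
      have htri : (r' + 1 : ℤ) * (r' + 1 + 1) / 2 = r' * (r' + 1) / 2 + (r' + 1) := by
        rw [show (r' + 1 : ℤ) * (r' + 1 + 1) = r' * (r' + 1) + (r' + 1) * 2 by ring,
          Int.add_mul_ediv_right _ _ two_ne_zero]
      have := ih rfl
      rw [hcard] at hsum ⊢
      push_cast at hsum ⊢
      linarith

end Ordered

/-- Freiman: if `A` is a finite `d`-dimensional set in `ℝ^d`, then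
`|A + A| ≥ (d+1)|A| - d(d+1)/2`. -/
theorem stmt_0 (d : ℕ) (A : Finset (Fin d → ℝ))
    (hA : affineSpan ℝ (A : Set (Fin d → ℝ)) = ⊤) :
    ((A + A).card : ℤ) ≥ (d + 1) * A.card - d * (d + 1) / 2 := by
  set e := toLexLinearEquiv ℝ (Fin d → ℝ)
  have hcard : #(A.image e) = #A := card_image_of_injective A e.injective
  have hsum : #(A.image e + A.image e) = #(A + A) := by
    rw [← image_add e, card_image_of_injective _ e.injective]
  have hdim : finrank ℝ (vectorSpan ℝ (A.image e : Set (Lex (Fin d → ℝ)))) = d := by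
    have htop := (AffineEquiv.span_eq_top_iff e.toAffineEquiv).1 hA
    rw [← direction_affineSpan, coe_image, ← LinearEquiv.coe_toAffineEquiv, htop,
      AffineSubspace.direction_top, finrank_top, ← e.finrank_eq, finrank_fin_fun]
  simpa [hcard, hsum] using freiman_le_card_add_self (A.image e) hdim
end

section
/- If A is a finite d-dimensional subset of ℝ^d, then for every k ≥ 1, |kA| ≥ C(d+k-1, k-1)·|A| - (k-1)·C(d+k-1, k). -/
/-!
Induction on `|A|`, with `k = K + 1`. If `|A| = d + 1`, then `A` is a simplex: multisets of
size `k` from its vertices have pairwise distinct sums, so `|kA| ≥ C(d+k, k)`, which is exactly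
the bound. Otherwise some vertex `v` of `conv A` can be removed so that `A' = A \ {v}` is still
`d`-dimensional. A facet of `conv A'` visible from `v` yields an affine `φ` with `φ ≤ 0` on `A'`,
`φ v > 0`, and a simplex `S ⊆ {v} ∪ (A' ∩ {φ = 0})`. On the linear part of `φ`, the `C(d+K, K)`
sums in `v + KS` lie strictly above every element of `kA'`, so `|kA| ≥ |kA'| + C(d+K, K)`, which
is the increment of the bound.
-/

open Finset Pointwise

/-- `k`-fold Minkowski sum of a finite set (with `kfold 0 A = {0}`). -/
def kfold {E : Type*} [DecidableEq E] [AddMonoid E] : ℕ → Finset E → Finset E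
  | 0, _ => {0}
  | n + 1, A => kfold n A + A

section kfold

variable {E : Type*} [DecidableEq E] [AddCommMonoid E]

theorem kfold_mono {A B : Finset E} (h : A ⊆ B) : ∀ n, kfold n A ⊆ kfold n B
  | 0 => subset_rfl
  | n + 1 => add_subset_add (kfold_mono h n) h

theorem multiset_sum_mem_kfold {A : Finset E} {m : Multiset E} (hm : ∀ a ∈ m, a ∈ A) :
    m.sum ∈ kfold (Multiset.card m) A := by
  induction m using Multiset.induction_on with
  | empty => simp [kfold]
  | cons a m ih =>
    rw [Multiset.sum_cons, Multiset.card_cons, add_comm a]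
    exact add_mem_add (ih fun b hb => hm b (Multiset.mem_cons_of_mem hb))
      (hm a (Multiset.mem_cons_self a m))

variable {F M : Type*} [AddCommMonoid M] [PartialOrder M] [IsOrderedAddMonoid M]
  [FunLike F E M] [AddMonoidHomClass F E M] (f : F) {A : Finset E} {c : M}

theorem map_le_nsmul_of_mem_kfold (h : ∀ a ∈ A, f a ≤ c) :
    ∀ {n x}, x ∈ kfold n A → f x ≤ n • c
  | 0, x, hx => by simp_all [kfold]
  | n + 1, _, hx => by
    obtain ⟨y, hy, a, ha, rfl⟩ := mem_add.mp hx
    rw [map_add, succ_nsmul]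
    exact add_le_add (map_le_nsmul_of_mem_kfold h hy) (h a ha)

theorem nsmul_le_map_of_mem_kfold (h : ∀ a ∈ A, c ≤ f a) :
    ∀ {n x}, x ∈ kfold n A → n • c ≤ f x
  | 0, x, hx => by simp_all [kfold]
  | n + 1, _, hx => by
    obtain ⟨y, hy, a, ha, rfl⟩ := mem_add.mp hx
    rw [map_add, succ_nsmul]
    exact add_le_add (nsmul_le_map_of_mem_kfold h hy) (h a ha)

end kfold

theorem Multiset.sum_map_eq_sum_count_nsmul {ι M : Type*} [DecidableEq ι] [AddCommMonoid M]
    {m : Multiset ι} {s : Finset ι} (hm : ∀ i ∈ m, i ∈ s) (p : ι → M) :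
    (m.map p).sum = ∑ i ∈ s, m.count i • p i := by
  rw [Finset.sum_multiset_map_count]
  refine sum_subset (fun i hi => hm i (mem_toFinset.1 hi)) fun i _ hi => ?_
  rw [count_eq_zero.2 (mt mem_toFinset.2 hi), zero_nsmul]

section AffineIndependent

variable {k V ι : Type*} [Ring k] [CharZero k] [AddCommGroup V] [Module k V]

theorem AffineIndependent.eq_of_multiset_sum_map_eq {p : ι → V} (hp : AffineIndependent k p)
    {μ ν : Multiset ι} (hcard : Multiset.card μ = Multiset.card ν)
    (h : (μ.map p).sum = (ν.map p).sum) : μ = ν := by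
  classical
  set s := μ.toFinset ∪ ν.toFinset
  have hμ : ∀ i ∈ μ, i ∈ s := fun i hi => mem_union_left _ (Multiset.mem_toFinset.2 hi)
  have hν : ∀ i ∈ ν, i ∈ s := fun i hi => mem_union_right _ (Multiset.mem_toFinset.2 hi)
  have hcount := hp.eq_of_sum_eq_sum (s := s) (w₁ := fun i => (μ.count i : k))
    (w₂ := fun i => (ν.count i : k))
    (by simp only [← Nat.cast_sum, Multiset.sum_count_eq_card hμ, Multiset.sum_count_eq_card hν,
      hcard])
    (by simp only [Nat.cast_smul_eq_nsmul, ← Multiset.sum_map_eq_sum_count_nsmul hμ,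
      ← Multiset.sum_map_eq_sum_count_nsmul hν, h])
  refine Multiset.ext.2 fun i => ?_
  by_cases hi : i ∈ s
  · exact_mod_cast hcount i hi
  · rw [Multiset.count_eq_zero.2 (mt (hμ i) hi), Multiset.count_eq_zero.2 (mt (hν i) hi)]

variable [DecidableEq V]

theorem choose_le_card_kfold_of_affineIndependent {S : Finset V}
    (hS : AffineIndependent k ((↑) : S → V)) (n : ℕ) :
    (#S + n - 1).choose n ≤ #(kfold n S) := by
  have hmaps : Set.MapsTo (fun μ : Sym S n => ((μ : Multiset S).map Subtype.val).sum)
      (univ : Finset (Sym S n)) (kfold n S) := fun μ _ => by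
    simpa using multiset_sum_mem_kfold (A := S) (m := (μ : Multiset S).map Subtype.val)
      fun a ha => by obtain ⟨b, -, rfl⟩ := Multiset.mem_map.1 ha; exact b.2
  calc (#S + n - 1).choose n = #(univ : Finset (Sym S n)) := by
        rw [card_univ, Sym.card_sym_eq_choose, Fintype.card_coe]
    _ ≤ #(kfold n S) := card_le_card_of_injOn _ hmaps fun μ _ ν _ h =>
        Sym.coe_injective (hS.eq_of_multiset_sum_map_eq (by simp) h)

end AffineIndependent

theorem AffineSubspace.exists_affineMap_eq_zero_of_notMem {k V : Type*} [Field k] [AddCommGroup V]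
    [Module k V] (S : AffineSubspace k V) {x : V} (hx : x ∉ S) :
    ∃ φ : V →ᵃ[k] k, (∀ y ∈ S, φ y = 0) ∧ φ x = 1 := by
  rcases S.eq_bot_or_nonempty with rfl | ⟨y₀, hy₀⟩
  · exact ⟨AffineMap.const k V 1, fun y hy => absurd hy (AffineSubspace.notMem_bot k V y), rfl⟩
  obtain ⟨f, hfx, hf⟩ := Submodule.exists_dual_map_eq_bot_of_notMem
    (mt (S.vsub_right_mem_direction_iff_mem hy₀ x).1 hx) inferInstance
  rw [vsub_eq_sub] at hfx
  have hf' : ∀ y ∈ S, f (y - y₀) = 0 := fun y hy => by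
    simpa [hf] using Submodule.mem_map_of_mem (f := f) (S.vsub_mem_direction hy hy₀)
  exact ⟨(f (x - y₀))⁻¹ • (f.toAffineMap - AffineMap.const k V (f y₀)),
    fun y hy => by simp [← map_sub, hf' y hy], by simp [← map_sub, hfx]⟩

theorem Finset.exists_affineMap_eq_zero_of_affineSpan_erase_ne_top {k V : Type*} [Field k]
    [AddCommGroup V] [Module k V] [DecidableEq V] {A : Finset V} (hA : affineSpan k (A : Set V) = ⊤)
    {e : V} (hne : affineSpan k ((A.erase e : Finset V) : Set V) ≠ ⊤) :
    ∃ φ : V →ᵃ[k] k, (∀ a ∈ A.erase e, φ a = 0) ∧ φ e = 1 := by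
  have he : e ∉ affineSpan k ((A.erase e : Finset V) : Set V) := fun h =>
    hne (top_unique (hA ▸ affineSpan_le.2 fun a ha => by
      rcases eq_or_ne a e with rfl | hae
      · exact h
      · exact subset_affineSpan k _ (mem_erase.2 ⟨hae, ha⟩)))
  obtain ⟨φ, hφ0, hφ1⟩ := AffineSubspace.exists_affineMap_eq_zero_of_notMem _ he
  exact ⟨φ, fun a ha => hφ0 a (subset_affineSpan k _ ha), hφ1⟩

theorem Finset.exists_affineIndependent_subset_card_eq {k V : Type*} [DivisionRing k]
    [AddCommGroup V] [Module k V] [FiniteDimensional k V] {A : Finset V}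
    (hA : affineSpan k (A : Set V) = ⊤) :
    ∃ B ⊆ A, affineSpan k (B : Set V) = ⊤ ∧ AffineIndependent k ((↑) : B → V) ∧
      #B = Module.finrank k V + 1 := by
  obtain ⟨t, htA, hspan, hind⟩ := exists_affineIndependent k V (A : Set V)
  lift t to Finset V using A.finite_toSet.subset htA
  refine ⟨t, by exact_mod_cast htA, hspan.trans hA, hind, ?_⟩
  simpa using hind.affineSpan_eq_top_iff_card_eq_finrank_add_one.1 (by simpa [hA] using hspan)

section Affine

variable {V : Type*} [AddCommGroup V] [Module ℝ V]

theorem exists_filter_eq_zero_ssubset {A : Finset V} {v x : V} {φ ψ : V →ᵃ[ℝ] ℝ}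
    (hφA : ∀ a ∈ A, φ a ≤ 0) (hφv : 0 < φ v) (hψv : ψ v = 0)
    (hψ : ∀ a ∈ A, φ a = 0 → ψ a = 0) (hxA : x ∈ A) (hψx : 0 < ψ x) :
    ∃ φ' : V →ᵃ[ℝ] ℝ, (∀ a ∈ A, φ' a ≤ 0) ∧ 0 < φ' v ∧
      {a ∈ A | φ a = 0} ⊂ {a ∈ A | φ' a = 0} := by
  obtain ⟨a₀, ha₀, hmin⟩ := exists_min_image {a ∈ A | 0 < ψ a} (fun a => -φ a / ψ a)
    ⟨x, mem_filter.2 ⟨hxA, hψx⟩⟩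
  obtain ⟨ha₀A, hψa₀⟩ := mem_filter.1 ha₀
  set t := -φ a₀ / ψ a₀ with ht_def
  have ht : 0 ≤ t := div_nonneg (neg_nonneg.2 (hφA a₀ ha₀A)) hψa₀.le
  have hφ' : ∀ y, (φ + t • ψ) y = φ y + t * ψ y := fun y => rfl
  refine ⟨φ + t • ψ, fun a ha => ?_, by simpa [hφ', hψv] using hφv, ?_⟩
  · rw [hφ']
    rcases le_or_gt (ψ a) 0 with hψa | hψa
    · nlinarith [hφA a ha]
    · have := hmin a (mem_filter.2 ⟨ha, hψa⟩)
      rw [le_div_iff₀ hψa] at this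
      linarith
  · refine (ssubset_iff_of_subset fun a ha => ?_).2 ⟨a₀, ?_, ?_⟩
    · obtain ⟨ha, hφa⟩ := mem_filter.1 ha
      exact mem_filter.2 ⟨ha, by rw [hφ', hφa, hψ a ha hφa]; ring⟩
    · exact mem_filter.2 ⟨ha₀A, by rw [hφ', ht_def, div_mul_cancel₀ _ hψa₀.ne', add_neg_cancel]⟩
    · exact fun h => hψa₀.ne' (hψ a₀ ha₀A (mem_filter.1 h).2)

theorem notMem_convexHull_erase_of_mem_extremePoints [DecidableEq V] {A : Finset V} {e : V}
    (he : e ∈ (convexHull ℝ (A : Set V)).extremePoints ℝ) :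
    e ∉ convexHull ℝ ((A.erase e : Finset V) : Set V) := by
  rw [(convex_convexHull ℝ _).mem_extremePoints_iff_mem_sdiff_convexHull_sdiff] at he
  refine fun h => he.2 (convexHull_mono ?_ h)
  rw [coe_erase]
  exact Set.sdiff_subset_sdiff_left (subset_convexHull ℝ _)

end Affine

theorem Nat.choose_mul_succ_eq_choose_succ_add (d K : ℕ) :
    (d + K).choose K * (d + 1) = (d + K + 1).choose (K + 1) + K * (d + K).choose (K + 1) := by
  have h := Nat.choose_succ_right_eq (d + K) K
  rw [Nat.add_sub_cancel] at h
  rw [Nat.choose_succ_succ']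
  linarith

section Normed

variable {V : Type*} [NormedAddCommGroup V] [NormedSpace ℝ V]

theorem subset_convexHull_extremePoints_convexHull (A : Finset V) :
    (A : Set V) ⊆ convexHull ℝ ((convexHull ℝ (A : Set V)).extremePoints ℝ) := by
  have hclosed : IsClosed (convexHull ℝ ((convexHull ℝ (A : Set V)).extremePoints ℝ)) :=
    (A.finite_toSet.subset extremePoints_convexHull_subset).isClosed_convexHull ℝ
  rw [← hclosed.closure_eq, closure_convexHull_extremePoints
    (A.finite_toSet.isCompact_convexHull ℝ) (convex_convexHull ℝ _)]
  exact subset_convexHull ℝ _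

variable [DecidableEq V]

theorem exists_affineMap_nonpos_pos_affineSpan_insert_eq_top {A : Finset V}
    (hA : affineSpan ℝ (A : Set V) = ⊤) {v : V} (hv : v ∉ convexHull ℝ (A : Set V)) :
    ∃ φ : V →ᵃ[ℝ] ℝ, (∀ a ∈ A, φ a ≤ 0) ∧ 0 < φ v ∧
      affineSpan ℝ ((insert v {a ∈ A | φ a = 0} : Finset V) : Set V) = ⊤ := by
  obtain ⟨f, u, hfA, hfv⟩ := geometric_hahn_banach_closed_point (convex_convexHull ℝ _)
    (A.finite_toSet.isClosed_convexHull ℝ) hv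
  -- While `v` and the face `A ∩ {φ = 0}` do not span, rotating `φ = 0` about their span
  -- enlarges the face.
  by_contra! hspan
  have grow : ∀ n : ℕ, ∃ φ : V →ᵃ[ℝ] ℝ, (∀ a ∈ A, φ a ≤ 0) ∧ 0 < φ v ∧
      n ≤ #{a ∈ A | φ a = 0} := by
    intro n
    induction n with
    | zero =>
      refine ⟨(f : V →ₗ[ℝ] ℝ).toAffineMap - AffineMap.const ℝ V u, fun a ha => ?_, ?_,
        Nat.zero_le _⟩
      · simpa using (hfA a (subset_convexHull ℝ _ ha)).le
      · simpa using hfv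
    | succ n ih =>
      obtain ⟨φ, hφA, hφv, hn⟩ := ih
      set S := affineSpan ℝ ((insert v {a ∈ A | φ a = 0} : Finset V) : Set V)
      obtain ⟨x, hxA, hxS⟩ : ∃ x ∈ A, x ∉ S := by
        by_contra! h
        exact hspan φ hφA hφv (top_unique (hA ▸ affineSpan_le.2 h))
      obtain ⟨ψ, hψS, hψx⟩ := S.exists_affineMap_eq_zero_of_notMem hxS
      have hS : ∀ y ∈ insert v {a ∈ A | φ a = 0}, ψ y = 0 := fun y hy =>
        hψS y (subset_affineSpan ℝ _ (mem_coe.2 hy))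
      obtain ⟨φ', hφ'A, hφ'v, hlt⟩ := exists_filter_eq_zero_ssubset hφA hφv
        (hS v (mem_insert_self _ _))
        (fun a ha hφa => hS a (mem_insert_of_mem (mem_filter.2 ⟨ha, hφa⟩))) hxA
        (hψx ▸ one_pos)
      exact ⟨φ', hφ'A, hφ'v, hn.trans_lt (card_lt_card hlt)⟩
  obtain ⟨φ, -, -, hcard⟩ := grow (#A + 1)
  exact absurd (card_le_card (filter_subset (fun a => φ a = 0) A)) (by omega)

variable [FiniteDimensional ℝ V]

theorem exists_affineSpan_erase_eq_top_notMem_convexHull_erase {A : Finset V}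
    (hA : affineSpan ℝ (A : Set V) = ⊤) (hcard : Module.finrank ℝ V + 1 < #A) :
    ∃ v ∈ A, affineSpan ℝ ((A.erase v : Finset V) : Set V) = ⊤ ∧
      v ∉ convexHull ℝ ((A.erase v : Finset V) : Set V) := by
  classical
  obtain ⟨B, hBA, hB, -, hBcard⟩ := A.exists_affineIndependent_subset_card_eq hA
  obtain ⟨p, hpA, hpB⟩ := not_subset.1 fun h : A ⊆ B => by
    have := card_le_card h; omega
  set E := (convexHull ℝ (A : Set V)).extremePoints ℝ
  by_contra! hvert
  have hE : ∀ e ∈ E, e ∈ B ∧ ∃ φ : V →ᵃ[ℝ] ℝ, (∀ a ∈ A.erase e, φ a = 0) ∧ φ e = 1 := by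
    intro e he
    have heA : e ∈ A := extremePoints_convexHull_subset he
    have hne : affineSpan ℝ ((A.erase e : Finset V) : Set V) ≠ ⊤ := fun h =>
      notMem_convexHull_erase_of_mem_extremePoints he (hvert e heA h)
    refine ⟨?_, A.exists_affineMap_eq_zero_of_affineSpan_erase_ne_top hA hne⟩
    by_contra heB
    refine hne (top_unique (hB ▸ affineSpan_mono ℝ fun b hb => ?_))
    exact mem_erase.2 ⟨fun h => heB (h ▸ hb), hBA hb⟩
  -- `Φ = ∑ φ e` is `1` on the vertices, hence on `conv A ∋ p`, yet vanishes at `p`, which is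
  -- not a vertex since all vertices lie in `B`.
  choose! φ hφ0 hφ1 using fun e he => (hE e he).2
  let Φ : V →ᵃ[ℝ] ℝ := ∑ e ∈ A with e ∈ E, φ e
  have hΦ : ∀ y, Φ y = ∑ e ∈ A with e ∈ E, φ e y := fun y =>
    map_sum (AddMonoidHom.mk' (fun ψ : V →ᵃ[ℝ] ℝ => ψ y) fun _ _ => rfl) φ _
  have hΦE : E ⊆ Φ ⁻¹' {1} := fun e he => by
    have heA : e ∈ A := extremePoints_convexHull_subset he
    rw [Set.mem_preimage, hΦ, sum_eq_single_of_mem e (mem_filter.2 ⟨heA, he⟩)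
      fun e' he' hne => hφ0 e' (mem_filter.1 he').2 e (mem_erase.2 ⟨hne.symm, heA⟩), hφ1 e he]
    rfl
  have hΦp := convexHull_min hΦE ((convex_singleton 1).affine_preimage Φ)
    (subset_convexHull_extremePoints_convexHull A hpA)
  rw [Set.mem_preimage, hΦ, sum_eq_zero fun e he => hφ0 e (mem_filter.1 he).2 p
    (mem_erase.2 ⟨fun h => hpB (h ▸ (hE e (mem_filter.1 he).2).1), hpA⟩)] at hΦp
  exact zero_ne_one hΦp

theorem card_kfold_erase_add_choose_le {A : Finset V} {v : V} (hvA : v ∈ A)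
    (hspan : affineSpan ℝ ((A.erase v : Finset V) : Set V) = ⊤)
    (hv : v ∉ convexHull ℝ ((A.erase v : Finset V) : Set V)) (K : ℕ) :
    #(kfold (K + 1) (A.erase v)) + (Module.finrank ℝ V + K).choose K ≤ #(kfold (K + 1) A) := by
  obtain ⟨φ, hφA, hφv, hφspan⟩ := exists_affineMap_nonpos_pos_affineSpan_insert_eq_top hspan hv
  obtain ⟨S, hS, -, hSind, hScard⟩ := Finset.exists_affineIndependent_subset_card_eq hφspan
  have hSA : S ⊆ A := hS.trans (insert_subset hvA ((filter_subset _ _).trans (erase_subset _ _)))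
  have hf : ∀ x, φ.linear x = φ x - φ 0 := fun x => by simp [AffineMap.decomp']
  have hle : ∀ a ∈ A.erase v, φ.linear a ≤ -φ 0 := fun a ha => by
    rw [hf]; linarith [hφA a ha]
  have hge : ∀ s ∈ S, -φ 0 ≤ φ.linear s := fun s hs => by
    rw [hf]
    rcases mem_insert.1 (hS hs) with rfl | hs'
    · linarith
    · linarith [(mem_filter.1 hs').2]
  have hdisj : Disjoint (kfold (K + 1) (A.erase v)) (kfold K S + {v}) := by
    refine disjoint_right.2 fun x hx hx' => ?_
    obtain ⟨y, hy, w, hw, rfl⟩ := mem_add.1 hx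
    have h1 := map_le_nsmul_of_mem_kfold φ.linear hle hx'
    rw [mem_singleton.1 hw] at h1
    have h2 := nsmul_le_map_of_mem_kfold φ.linear hge hy
    rw [map_add, nsmul_eq_mul] at h1
    rw [nsmul_eq_mul] at h2
    push_cast at h1
    linarith [hf v]
  calc #(kfold (K + 1) (A.erase v)) + (Module.finrank ℝ V + K).choose K
      ≤ #(kfold (K + 1) (A.erase v)) + #(kfold K S + {v}) := by
        rw [card_add_singleton]
        simpa [hScard] using choose_le_card_kfold_of_affineIndependent hSind K
    _ = #(kfold (K + 1) (A.erase v) ∪ (kfold K S + {v})) := (card_union_of_disjoint hdisj).symm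
    _ ≤ #(kfold (K + 1) A) := card_le_card <| union_subset (kfold_mono (erase_subset _ _) _)
        (add_subset_add (kfold_mono hSA K) (singleton_subset_iff.2 hvA))

theorem choose_mul_card_le_card_kfold_add {A : Finset V} (hA : affineSpan ℝ (A : Set V) = ⊤)
    (K : ℕ) :
    (Module.finrank ℝ V + K).choose K * #A ≤
      #(kfold (K + 1) A) + K * (Module.finrank ℝ V + K).choose (K + 1) := by
  induction A using Finset.strongInduction with
  | H A ih =>
  obtain ⟨B, hBA, -, hBind, hBcard⟩ := A.exists_affineIndependent_subset_card_eq hA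
  rcases (card_le_card hBA).eq_or_lt with hcard | hcard
  · obtain rfl := eq_of_subset_of_card_le hBA hcard.ge
    have hsimplex := choose_le_card_kfold_of_affineIndependent hBind (K + 1)
    rw [hBcard, add_right_comm, Nat.add_sub_cancel] at hsimplex
    rw [hBcard, Nat.choose_mul_succ_eq_choose_succ_add]
    exact Nat.add_le_add_right hsimplex _
  · obtain ⟨v, hvA, hspan, hv⟩ :=
      exists_affineSpan_erase_eq_top_notMem_convexHull_erase hA (hBcard ▸ hcard)
    have hrec := ih _ (erase_ssubset hvA) hspan
    have hstep := card_kfold_erase_add_choose_le hvA hspan hv K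
    rw [card_erase_of_mem hvA] at hrec
    obtain ⟨n, hn⟩ : ∃ n, #A = n + 1 := ⟨#A - 1, by omega⟩
    rw [hn, Nat.add_sub_cancel] at hrec
    rw [hn, mul_add_one]
    omega

end Normed

/-- Freiman–Matolcsi–Ruzsa: if `A` is finite `d`-dimensional in `ℝ^d`, then for
every `k ≥ 1`, `|kA| ≥ C(d+k-1,k-1)|A| - (k-1)C(d+k-1,k)`. -/
theorem stmt_2 (d : ℕ) (A : Finset (Fin d → ℝ))
    (hA : affineSpan ℝ (A : Set (Fin d → ℝ)) = ⊤)
    (k : ℕ) (hk : 1 ≤ k) :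
    ((kfold k A).card : ℤ) ≥
      (d + k - 1).choose (k - 1) * A.card - ((k : ℤ) - 1) * (d + k - 1).choose k := by
  obtain ⟨K, rfl⟩ : ∃ K, k = K + 1 := ⟨k - 1, by omega⟩
  have h := choose_mul_card_le_card_kfold_add hA K
  rw [Module.finrank_fin_fun] at h
  rw [show d + (K + 1) - 1 = d + K by omega, Nat.add_sub_cancel]
  push_cast
  have hz : ((d + K).choose K * #A : ℤ) ≤ #(kfold (K + 1) A) + K * (d + K).choose (K + 1) := by
    exact_mod_cast h
  linarith
end

section
/- Let C = {v₀, ..., v_d} be an affinely independent set in ℝ^d spanning a d-simplex S = conv(C), let k ≥ 1, and let a, b be distinct points of S. If (a + kC) ∩ (b + kC) ≠ ∅, then both a ∈ C and b ∈ C. -/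
open Finset Pointwise

/-!
Write `a = ∑ αᵢ vᵢ` and `b = ∑ βᵢ vᵢ` in barycentric coordinates; a common point of `a + kC` and
`b + kC` is `a + ∑ mᵢ vᵢ = b + ∑ nᵢ vᵢ` with `∑ mᵢ = ∑ nᵢ = k`. Both sides are affine combinations
with total weight `1 + k`, so affine independence gives `αᵢ - βᵢ = nᵢ - mᵢ ∈ ℤ`. These integers sum
to `0` and are not all `0` since `a ≠ b`, so one of them is positive, i.e. `αᵢ ≥ 1 + βᵢ ≥ 1`, which
forces `α` to be the `i`-th vertex of the standard simplex and `a = vᵢ`; symmetrically for `b`.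
-/

theorem exists_sum_nsmul_eq_of_mem_kfold {ι E : Type*} [Fintype ι] [DecidableEq ι]
    [DecidableEq E] [AddCommMonoid E] (v : ι → E) {k : ℕ} {x : E}
    (hx : x ∈ kfold k (univ.image v)) : ∃ m : ι → ℕ, ∑ i, m i = k ∧ ∑ i, m i • v i = x := by
  induction k generalizing x with
  | zero => exact ⟨0, by simp, by simp_all [kfold]⟩
  | succ k ih =>
    obtain ⟨y, hy, _, hi, rfl⟩ := mem_add.1 hx
    obtain ⟨i, -, rfl⟩ := mem_image.1 hi
    obtain ⟨m, hm, rfl⟩ := ih hy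
    refine ⟨m + Pi.single i 1, ?_, ?_⟩
    · simp [sum_add_distrib, hm]
    · simp [add_smul, sum_add_distrib, Pi.single_apply]

section

variable {ι E : Type*} [Fintype ι] [AddCommGroup E] [Module ℝ E]

theorem exists_mem_stdSimplex_sum_smul_eq {v : ι → E} {a : E}
    (ha : a ∈ convexHull ℝ (Set.range v)) : ∃ w ∈ stdSimplex ℝ ι, ∑ i, w i • v i = a := by
  classical
  have hv : Set.range v = Fintype.linearCombination ℝ v '' Set.range (fun i ↦ Pi.single i 1) := by
    rw [← Set.range_comp]
    simp [Function.comp_def, Fintype.linearCombination_apply_single]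
  rw [hv, ← LinearMap.image_convexHull, convexHull_rangle_single_eq_stdSimplex] at ha
  obtain ⟨w, hw, rfl⟩ := ha
  exact ⟨w, hw, (Fintype.linearCombination_apply ℝ v w).symm⟩

theorem AffineIndependent.sub_eq_of_add_sum_nsmul_eq {v : ι → E} (hv : AffineIndependent ℝ v)
    {α β : ι → ℝ} {m n : ι → ℕ}
    (hαβ : ∑ i, α i = ∑ i, β i) (hmn : ∑ i, m i = ∑ i, n i)
    (h : ∑ i, α i • v i + ∑ i, m i • v i = ∑ i, β i • v i + ∑ i, n i • v i) (i : ι) :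
    α i - β i = ((n i - m i : ℤ) : ℝ) := by
  have hcoeff := hv.eq_of_sum_eq_sum (w₁ := fun i ↦ α i + m i) (w₂ := fun i ↦ β i + n i)
    (s := univ) (by simp only [sum_add_distrib, hαβ, ← Nat.cast_sum, hmn])
    (by simpa only [add_smul, sum_add_distrib, Nat.cast_smul_eq_nsmul] using h) i (mem_univ i)
  push_cast
  linarith

end

theorem eq_single_of_mem_stdSimplex_of_apply_eq_one {ι 𝕜 : Type*} [Fintype ι] [DecidableEq ι]
    [Ring 𝕜] [PartialOrder 𝕜] [IsOrderedRing 𝕜] {w : ι → 𝕜} (hw : w ∈ stdSimplex 𝕜 ι) {i : ι}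
    (hi : w i = 1) : w = Pi.single i 1 := by
  have hrest : ∑ j ∈ univ.erase i, w j = 0 := by
    have h := add_sum_erase univ w (mem_univ i)
    rw [hi, hw.2] at h
    exact add_eq_left.1 h
  ext j
  rcases eq_or_ne j i with rfl | hji
  · simp [hi]
  · rw [Pi.single_eq_of_ne hji]
    exact (sum_eq_zero_iff_of_nonneg fun j _ ↦ hw.1 j).1 hrest j (mem_erase.2 ⟨hji, mem_univ j⟩)

theorem exists_apply_eq_one_of_sub_eq_intCast {ι : Type*} [Fintype ι] {α β : ι → ℝ}
    (hα : α ∈ stdSimplex ℝ ι) (hβ : β ∈ stdSimplex ℝ ι) (hαβ : α ≠ β) {z : ι → ℤ}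
    (hz : ∀ i, α i - β i = z i) : ∃ i, α i = 1 := by
  have hsum : ∑ i, (α i - β i) = 0 := by rw [sum_sub_distrib, hα.2, hβ.2, sub_self]
  have hne : ∃ i ∈ univ, α i - β i ≠ 0 := by
    by_contra! h
    exact hαβ (funext fun i ↦ sub_eq_zero.1 (h i (mem_univ i)))
  obtain ⟨i, -, hi⟩ := exists_pos_of_sum_zero_of_exists_nonzero _ hsum hne
  have hzi : (0 : ℤ) < z i := by exact_mod_cast hz i ▸ hi
  have hzi_ge : (1 : ℝ) ≤ z i := by exact_mod_cast hzi
  exact ⟨i, le_antisymm (stdSimplex.le_one ⟨α, hα⟩ i) (by linarith [hβ.1 i, hz i])⟩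

theorem stmt_4_general (d k : ℕ) (v : Fin (d + 1) → (Fin d → ℝ))
    (hv : AffineIndependent ℝ v) (a b : Fin d → ℝ)
    (ha : a ∈ convexHull ℝ (Set.range v))
    (hb : b ∈ convexHull ℝ (Set.range v))
    (hab : a ≠ b)
    (h : ((({a} : Finset (Fin d → ℝ)) + kfold k (Finset.image v Finset.univ)) ∩
          (({b} : Finset (Fin d → ℝ)) + kfold k (Finset.image v Finset.univ))).Nonempty) :
    a ∈ Set.range v ∧ b ∈ Set.range v := by
  obtain ⟨α, hα, rfl⟩ := exists_mem_stdSimplex_sum_smul_eq ha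
  obtain ⟨β, hβ, rfl⟩ := exists_mem_stdSimplex_sum_smul_eq hb
  obtain ⟨_, hz⟩ := h
  simp only [mem_inter, mem_add, mem_singleton, exists_eq_left] at hz
  obtain ⟨⟨x, hx, rfl⟩, ⟨y, hy, hxy⟩⟩ := hz
  obtain ⟨m, hm, rfl⟩ := exists_sum_nsmul_eq_of_mem_kfold v hx
  obtain ⟨n, hn, rfl⟩ := exists_sum_nsmul_eq_of_mem_kfold v hy
  have hsub := hv.sub_eq_of_add_sum_nsmul_eq (hα.2.trans hβ.2.symm) (hm.trans hn.symm) hxy.symm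
  have hαβ : α ≠ β := by rintro rfl; exact hab rfl
  obtain ⟨i, hi⟩ := exists_apply_eq_one_of_sub_eq_intCast hα hβ hαβ hsub
  obtain ⟨j, hj⟩ := exists_apply_eq_one_of_sub_eq_intCast hβ hα hαβ.symm
    (z := fun i ↦ m i - n i) fun i ↦ by rw [← neg_sub, hsub i]; push_cast; ring
  exact ⟨⟨i, by simp [eq_single_of_mem_stdSimplex_of_apply_eq_one hα hi]⟩,
    ⟨j, by simp [eq_single_of_mem_stdSimplex_of_apply_eq_one hβ hj]⟩⟩

/-- If `a ≠ b` are points of the simplex `S = conv C` with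
`(a + kC) ∩ (b + kC) ≠ ∅`, then both `a` and `b` are vertices of `S`. -/
theorem stmt_4 (d k : ℕ) (hk : 1 ≤ k) (v : Fin (d + 1) → (Fin d → ℝ))
    (hv : AffineIndependent ℝ v) (a b : Fin d → ℝ)
    (ha : a ∈ convexHull ℝ (Set.range v))
    (hb : b ∈ convexHull ℝ (Set.range v))
    (hab : a ≠ b)
    (h : ((({a} : Finset (Fin d → ℝ)) + kfold k (Finset.image v Finset.univ)) ∩
          (({b} : Finset (Fin d → ℝ)) + kfold k (Finset.image v Finset.univ))).Nonempty) :
    a ∈ Set.range v ∧ b ∈ Set.range v :=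
  stmt_4_general d k v hv a b ha hb hab h
end

section
/- Let A, B ⊆ ℝ be finite sets with A ⊆ conv(B) = [0,1] and 0, 1 ∈ B, and let k ≥ 1. Then |A + kB| ≥ (k+1)(|A| - 1) + 1. -/
open Finset Pointwise

/-!
Since `0, 1 ∈ B`, the sumset `kB` contains `{0, 1, …, k}`, so `A + kB` contains the union of
the translates `A + j`, `0 ≤ j ≤ k`. As `A ⊆ [0, 1]`, every point of `A + {0, …, j}` is at most
`j + 1` and every point of `A + (j + 1)` is at least `j + 1`, so each new translate adds at
least `|A| - 1` new points.
-/

lemma natCast_mem_kfold {E : Type*} [DecidableEq E] [AddMonoidWithOne E] {B : Finset E}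
    (h0 : 0 ∈ B) (h1 : 1 ∈ B) {k n : ℕ} (hn : n ≤ k) : (n : E) ∈ kfold k B := by
  induction k generalizing n with
  | zero => simp [kfold, Nat.le_zero.mp hn]
  | succ k ih =>
    show (n : E) ∈ kfold k B + B
    rcases hn.lt_or_eq with hn | rfl
    · simpa using add_mem_add (ih (Nat.lt_succ_iff.mp hn)) h0
    · simpa using add_mem_add (ih le_rfl) h1

lemma card_add_card_le_card_union_add_one {α : Type*} [DecidableEq α] [LinearOrder α]
    {s t : Finset α} {c : α} (hs : ∀ x ∈ s, x ≤ c) (ht : ∀ y ∈ t, c ≤ y) :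
    #s + #t ≤ #(s ∪ t) + 1 := by
  rw [← card_union_add_card_inter]
  gcongr
  refine card_le_one.mpr fun x hx y hy => ?_
  rw [mem_inter] at hx hy
  exact (le_antisymm (hs x hx.1) (ht x hx.2)).trans (le_antisymm (hs y hy.1) (ht y hy.2)).symm

lemma card_mul_le_card_add_range_add {R : Type*} [DecidableEq R] [Ring R] [LinearOrder R]
    [IsOrderedRing R] {A : Finset R} (hA : (A : Set R) ⊆ Set.Icc 0 1) (k : ℕ) :
    (k + 1) * #A ≤ #(A + (range (k + 1)).image (Nat.cast : ℕ → R)) + k := by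
  induction k with
  | zero => simp
  | succ k ih =>
    have hleft : ∀ x ∈ A + (range (k + 1)).image (Nat.cast : ℕ → R), x ≤ ((k + 1 : ℕ) : R) := by
      simp only [mem_add, mem_image, mem_range]
      rintro _ ⟨a, ha, _, ⟨j, hj, rfl⟩, rfl⟩
      have hj : (j : R) ≤ k := Nat.mono_cast (Nat.lt_succ_iff.mp hj)
      push_cast
      exact (add_le_add (hA ha).2 hj).trans_eq (add_comm _ _)
    have hright : ∀ y ∈ A + {((k + 1 : ℕ) : R)}, ((k + 1 : ℕ) : R) ≤ y := by
      simp only [mem_add, mem_singleton]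
      rintro _ ⟨a, ha, _, rfl, rfl⟩
      exact le_add_of_nonneg_left (hA ha).1
    have hunion := card_add_card_le_card_union_add_one hleft hright
    rw [card_add_singleton, union_comm, ← add_union, ← insert_eq, ← image_insert,
      ← range_add_one] at hunion
    linarith

theorem stmt_7_general (A B : Finset ℝ)
    (hB : convexHull ℝ (B : Set ℝ) = Set.Icc 0 1)
    (h0 : (0 : ℝ) ∈ B) (h1 : (1 : ℝ) ∈ B)
    (hA : (A : Set ℝ) ⊆ convexHull ℝ (B : Set ℝ))
    (k : ℕ) :
    ((A + kfold k B).card : ℤ) ≥ (k + 1) * ((A.card : ℤ) - 1) + 1 := by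
  have hrange : (range (k + 1)).image (Nat.cast : ℕ → ℝ) ⊆ kfold k B := by
    simp only [image_subset_iff, mem_range]
    exact fun n hn => natCast_mem_kfold h0 h1 (Nat.lt_succ_iff.mp hn)
  have hcard : (k + 1) * #A ≤ #(A + kfold k B) + k :=
    (card_mul_le_card_add_range_add (hB ▸ hA) k).trans
      (Nat.add_le_add_right (card_le_card (add_subset_add_left hrange)) k)
  zify at hcard
  linarith

/-- One–dimensional Matolcsi–Ruzsa inequality: if `A ⊆ conv B = [0,1]`
with `0, 1 ∈ B`, then `|A + kB| ≥ (k+1)(|A|-1) + 1`. -/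
theorem stmt_7 (A B : Finset ℝ)
    (hB : convexHull ℝ (B : Set ℝ) = Set.Icc 0 1)
    (h0 : (0 : ℝ) ∈ B) (h1 : (1 : ℝ) ∈ B)
    (hA : (A : Set ℝ) ⊆ convexHull ℝ (B : Set ℝ))
    (k : ℕ) (hk : 1 ≤ k) :
    ((A + kfold k B).card : ℤ) ≥ (k + 1) * ((A.card : ℤ) - 1) + 1 :=
  stmt_7_general A B hB h0 h1 hA k
end

section
/- Let B ⊆ ℝ be finite with conv(B) = [0,1], let Λ(B) be the subgroup of (ℝ, +) generated by B - B, and let A ⊆ [0,1] be finite with {0,1} ⊆ A. Then for every k ≥ 1, |A + kB| = (k+1)(|A|-1) + 1 holds if and only if (A + Λ(B)) ∩ [0,1] = A. -/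
open Finset Pointwise

/-!
Since `0, 1 ∈ B`, the iterated sumset `kB` contains `{0, …, k}` and lies in `[0, k] ∩ Λ(B)`, while
`|A + {0, …, k}| = (k + 1)(|A| - 1) + 1` because the integer translates of `A \ {1} ⊆ [0, 1)` are
disjoint. So equality means `A + kB = A + {0, …, k}`. If `A` is stable, each `a + c` with `c ∈ kB`
is moved by an integer `j ≤ k` into `(A + Λ(B)) ∩ [0, 1] = A`. Conversely, equality gives
`A + B ⊆ A + ℤ`, so each `b ∈ B` maps the finite image of `A` in `ℝ/ℤ` into, hence onto, itself;
thus all of `Λ(B)` stabilises that image, and a point of `(A + Λ(B)) ∩ [0, 1]` is congruent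
mod `1` to a point of `A`, so lies in `A` as `0, 1 ∈ A`.
-/

section kfold

variable {E : Type*} [DecidableEq E]

lemma kfold_succ [AddMonoid E] (n : ℕ) (B : Finset E) : kfold (n + 1) B = kfold n B + B := rfl

lemma coe_kfold_subset [AddMonoid E] {S : Type*} [SetLike S E] [AddSubmonoidClass S E] {s : S}
    {B : Finset E} (hB : (B : Set E) ⊆ s) : ∀ n, (kfold n B : Set E) ⊆ s
  | 0 => by simp [kfold, zero_mem]
  | n + 1 => by
    rw [kfold_succ, coe_add]
    rintro _ ⟨x, hx, b, hb, rfl⟩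
    exact add_mem (coe_kfold_subset hB n hx) (hB hb)

lemma coe_kfold_subset_Icc [Semiring E] [PartialOrder E] [IsOrderedRing E] {B : Finset E}
    (hB : (B : Set E) ⊆ Set.Icc 0 1) : ∀ n : ℕ, (kfold n B : Set E) ⊆ Set.Icc 0 n
  | 0 => by simp [kfold]
  | n + 1 => by
    rw [kfold_succ, coe_add, Nat.cast_succ]
    simpa using
      (Set.add_subset_add (coe_kfold_subset_Icc hB n) hB).trans (Set.Icc_add_Icc_subset _ _ _ _)

lemma image_Iic_subset_kfold [AddMonoidWithOne E] {B : Finset E} (h0 : 0 ∈ B) (h1 : 1 ∈ B) :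
    ∀ n, (Iic n).image (Nat.cast : ℕ → E) ⊆ kfold n B
  | 0 => by simp [kfold, Iic_eq_Icc]
  | n + 1 => by
    intro x hx
    obtain ⟨j, hj, rfl⟩ := mem_image.1 hx
    rw [kfold_succ, mem_add]
    obtain hjn | rfl := Nat.le_succ_iff.1 (mem_Iic.1 hj)
    · exact ⟨j, image_Iic_subset_kfold h0 h1 n (mem_image_of_mem _ (mem_Iic.2 hjn)), 0, h0,
        add_zero _⟩
    · exact ⟨n, image_Iic_subset_kfold h0 h1 n (mem_image_of_mem _ (mem_Iic.2 le_rfl)), 1, h1,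
        (Nat.cast_succ n).symm⟩

lemma zero_mem_kfold [AddMonoid E] {B : Finset E} (h0 : (0 : E) ∈ B) : ∀ n, (0 : E) ∈ kfold n B
  | 0 => mem_singleton_self _
  | n + 1 => mem_add.2 ⟨0, zero_mem_kfold h0 n, 0, h0, add_zero 0⟩

lemma subset_kfold [AddMonoid E] {B : Finset E} (h0 : (0 : E) ∈ B) {n : ℕ} (hn : 1 ≤ n) :
    B ⊆ kfold n B := by
  obtain ⟨m, rfl⟩ := Nat.exists_eq_add_of_le' hn
  exact fun b hb => mem_add.2 ⟨0, zero_mem_kfold h0 m, b, hb, zero_add b⟩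

end kfold

lemma mem_of_convexHull_eq_Icc {s : Set ℝ} {a b : ℝ} (hs : convexHull ℝ s = Set.Icc a b)
    (hab : a ≤ b) : a ∈ s ∧ b ∈ s := by
  have := extremePoints_convexHull_subset (𝕜 := ℝ) (A := s)
  rw [hs, Set.extremePoints_Icc hab] at this
  exact ⟨this (by simp), this (by simp)⟩

section floor

variable {K : Type*} [Field K] [LinearOrder K] [IsStrictOrderedRing K] [FloorSemiring K]

lemma exists_nat_le_sub_mem_Icc {x : K} {k : ℕ} (hx₀ : 0 ≤ x) (hxk : x ≤ k + 1) :
    ∃ j ≤ k, x - j ∈ Set.Icc 0 1 := by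
  refine ⟨min k ⌊x⌋₊, min_le_left _ _, ?_⟩
  rcases le_total ⌊x⌋₊ k with h | h
  · rw [min_eq_right h]
    exact ⟨sub_nonneg.2 (Nat.floor_le hx₀), by linarith [Nat.lt_floor_add_one x]⟩
  · rw [min_eq_left h]
    have : (k : K) ≤ x := (Nat.cast_le.2 h).trans (Nat.floor_le hx₀)
    exact ⟨sub_nonneg.2 this, by linarith⟩

lemma eq_and_eq_of_add_natCast_eq {a b : K} (ha : a ∈ Set.Ico 0 1) (hb : b ∈ Set.Ico 0 1)
    {m n : ℕ} (h : a + m = b + n) : a = b ∧ m = n := by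
  have floor_eq : ∀ {c : K} {k : ℕ}, c ∈ Set.Ico 0 1 → ⌊c + k⌋₊ = k := fun hc => by
    rw [Nat.floor_add_natCast hc.1, Nat.floor_eq_zero.2 hc.2, zero_add]
  obtain rfl : m = n := by rw [← floor_eq (k := m) ha, h, floor_eq hb]
  exact ⟨add_right_cancel h, rfl⟩

end floor

lemma card_add_image_Iic {A : Finset ℝ} (hA : (A : Set ℝ) ⊆ Set.Icc 0 1) (h0 : 0 ∈ A)
    (h1 : 1 ∈ A) (n : ℕ) :
    (#(A + (Iic n).image (Nat.cast : ℕ → ℝ)) : ℤ) = (n + 1) * (#A - 1) + 1 := by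
  set I := (Iic n).image (Nat.cast : ℕ → ℝ)
  have mem_Ico : ∀ a ∈ A.erase 1, a ∈ Set.Ico (0 : ℝ) 1 := fun a ha =>
    ⟨(hA (mem_of_mem_erase ha)).1, (hA (mem_of_mem_erase ha)).2.lt_of_ne (ne_of_mem_erase ha)⟩
  have hinj : ((A.erase 1 : Set ℝ) ×ˢ (I : Set ℝ)).InjOn fun p => p.1 + p.2 := by
    rintro ⟨a, _⟩ hp ⟨b, _⟩ hq h
    simp only [Set.mem_prod, mem_coe, I, mem_image] at hp hq
    obtain ⟨ha, m, -, rfl⟩ := hp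
    obtain ⟨hb, n, -, rfl⟩ := hq
    obtain ⟨rfl, rfl⟩ := eq_and_eq_of_add_natCast_eq (mem_Ico a ha) (mem_Ico b hb) h
    rfl
  have hsplit : A + I = insert ((n : ℝ) + 1) (A.erase 1 + I) := by
    ext x
    simp only [mem_insert, mem_add, mem_erase, I, mem_image, mem_Iic]
    constructor
    · rintro ⟨a, ha, _, ⟨j, hj, rfl⟩, rfl⟩
      by_cases ha1 : a = 1
      · subst ha1
        rcases hj.lt_or_eq with hj | rfl
        · exact Or.inr ⟨0, ⟨zero_ne_one, h0⟩, _, ⟨j + 1, hj, rfl⟩, by push_cast; ring⟩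
        · exact Or.inl (add_comm _ _)
      · exact Or.inr ⟨a, ⟨ha1, ha⟩, _, ⟨j, hj, rfl⟩, rfl⟩
    · rintro (rfl | ⟨a, ⟨-, ha⟩, y, hy, rfl⟩)
      · exact ⟨1, h1, n, ⟨n, le_rfl, rfl⟩, add_comm _ _⟩
      · exact ⟨a, ha, y, hy, rfl⟩
  have hnotMem : (n : ℝ) + 1 ∉ A.erase 1 + I := by
    simp only [mem_add, I, mem_image, mem_Iic, not_exists, not_and]
    rintro a ha _ ⟨j, hj, rfl⟩ h
    have : (j : ℝ) ≤ n := Nat.cast_le.2 hj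
    linarith [(mem_Ico a ha).2]
  have hI : #I = n + 1 := by
    rw [card_image_of_injective _ Nat.cast_injective, Nat.card_Iic]
  rw [hsplit, card_insert_of_notMem hnotMem, card_add_iff.2 hinj, card_erase_of_mem h1, hI,
    Nat.cast_add, Nat.cast_mul, Nat.cast_sub (card_pos.2 ⟨1, h1⟩)]
  push_cast
  ring

local notation "𝕋" => ℝ ⧸ AddSubgroup.zmultiples (1 : ℝ)

lemma mem_of_coe_eq_coe {A : Finset ℝ} (hA : (A : Set ℝ) ⊆ Set.Icc 0 1) (h0 : 0 ∈ A)
    (h1 : 1 ∈ A) {a x : ℝ} (ha : a ∈ A) (hx : x ∈ Set.Icc 0 1) (h : (x : 𝕋) = a) : x ∈ A := by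
  obtain ⟨m, hm⟩ := AddSubgroup.mem_zmultiples_iff.1 (QuotientAddGroup.eq.1 h)
  rw [zsmul_one] at hm
  have ha01 := hA ha
  have hm₀ : (-1 : ℝ) ≤ m := by linarith [hx.2, ha01.1]
  have hm₁ : (m : ℝ) ≤ 1 := by linarith [hx.1, ha01.2]
  have : -1 ≤ m ∧ m ≤ 1 := ⟨by exact_mod_cast hm₀, by exact_mod_cast hm₁⟩
  obtain rfl | rfl | rfl : m = -1 ∨ m = 0 ∨ m = 1 := by omega
  · rwa [show x = 1 by push_cast at hm; linarith [hx.2, ha01.1]]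
  · rwa [show x = a by push_cast at hm; linarith]
  · rwa [show x = 0 by push_cast at hm; linarith [hx.1, ha01.2]]

lemma closure_sub_le_stabilizer {A B : Finset ℝ} {k : ℕ}
    (hAB : A + B ⊆ A + (Iic k).image (Nat.cast : ℕ → ℝ)) :
    AddSubgroup.closure ((B : Set ℝ) - (B : Set ℝ)) ≤
      AddAction.stabilizer ℝ (((↑) : ℝ → 𝕋) '' A) := by
  have hB : ∀ b ∈ B, b ∈ AddAction.stabilizer ℝ (((↑) : ℝ → 𝕋) '' A) := by
    intro b hb
    rw [AddAction.mem_stabilizer_set' (A.finite_toSet.image _)]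
    rintro _ ⟨a, ha, rfl⟩
    obtain ⟨a', ha', _, hj, he⟩ := mem_add.1 (hAB (add_mem_add ha hb))
    obtain ⟨j, -, rfl⟩ := mem_image.1 hj
    refine ⟨a', ha', ?_⟩
    rw [AddAction.Quotient.vadd_coe, vadd_eq_add, add_comm b, ← he, QuotientAddGroup.eq]
    exact ⟨j, by simp⟩
  rw [AddSubgroup.closure_le]
  rintro _ ⟨b, hb, b', hb', rfl⟩
  exact sub_mem (hB b hb) (hB b' hb')

lemma stable_of_add_subset {A B : Finset ℝ} (hA : (A : Set ℝ) ⊆ Set.Icc 0 1) (h0 : 0 ∈ A)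
    (h1 : 1 ∈ A) {k : ℕ} (hAB : A + B ⊆ A + (Iic k).image (Nat.cast : ℕ → ℝ)) :
    ((A : Set ℝ) + (AddSubgroup.closure ((B : Set ℝ) - (B : Set ℝ)) : Set ℝ)) ∩ Set.Icc 0 1 =
      A := by
  refine subset_antisymm ?_ fun x hx => ⟨⟨x, hx, 0, zero_mem _, add_zero x⟩, hA hx⟩
  rintro _ ⟨⟨a, ha, l, hl, rfl⟩, hx⟩
  obtain ⟨a', ha', he⟩ := (AddAction.mem_stabilizer_set' (A.finite_toSet.image _)).1
    (closure_sub_le_stabilizer hAB hl) ⟨a, ha, rfl⟩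
  refine mem_of_coe_eq_coe hA h0 h1 ha' hx ?_
  rw [he, AddAction.Quotient.vadd_coe, vadd_eq_add, add_comm]

lemma add_kfold_subset_of_stable {A B : Finset ℝ} {Λ : AddSubgroup ℝ}
    (hA : (A : Set ℝ) ⊆ Set.Icc 0 1) (hB : (B : Set ℝ) ⊆ Set.Icc 0 1) (hBΛ : (B : Set ℝ) ⊆ Λ)
    (h1Λ : (1 : ℝ) ∈ Λ) (hstab : ((A : Set ℝ) + Λ) ∩ Set.Icc 0 1 = A) (k : ℕ) :
    A + kfold k B ⊆ A + (Iic k).image (Nat.cast : ℕ → ℝ) := by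
  intro _ hx
  obtain ⟨a, ha, c, hc, rfl⟩ := mem_add.1 hx
  have hcI := coe_kfold_subset_Icc hB k hc
  have haI := hA ha
  obtain ⟨j, hj, hmem⟩ := exists_nat_le_sub_mem_Icc (x := a + c) (k := k)
    (by linarith [hcI.1, haI.1]) (by linarith [hcI.2, haI.2])
  have hjΛ : (j : ℝ) ∈ Λ := by simpa using nsmul_mem h1Λ j
  have hA' : a + c - j ∈ A := by
    rw [← mem_coe, ← hstab]
    exact ⟨⟨a, ha, c - j, sub_mem (coe_kfold_subset hBΛ k hc) hjΛ, by ring⟩, hmem⟩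
  exact mem_add.2 ⟨_, hA', j, mem_image_of_mem _ (mem_Iic.2 hj), sub_add_cancel _ _⟩

/-- Equality in the one–dimensional Matolcsi–Ruzsa inequality holds exactly
for the sets `A` that are stable with respect to `B`, i.e.
`(A + Λ(B)) ∩ [0,1] = A` where `Λ(B)` is the group generated by `B - B`. -/
theorem stmt_8 (A B : Finset ℝ)
    (hB : convexHull ℝ (B : Set ℝ) = Set.Icc 0 1)
    (hA : (A : Set ℝ) ⊆ Set.Icc (0 : ℝ) 1)
    (h0 : (0 : ℝ) ∈ A) (h1 : (1 : ℝ) ∈ A)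
    (k : ℕ) (hk : 1 ≤ k) :
    ((A + kfold k B).card : ℤ) = (k + 1) * ((A.card : ℤ) - 1) + 1 ↔
      ((A : Set ℝ) + (AddSubgroup.closure ((B : Set ℝ) - (B : Set ℝ)) : Set ℝ)) ∩
          Set.Icc (0 : ℝ) 1 = (A : Set ℝ) := by
  obtain ⟨hB0, hB1⟩ := mem_of_convexHull_eq_Icc hB zero_le_one
  have hB01 : (B : Set ℝ) ⊆ Set.Icc 0 1 := hB ▸ subset_convexHull ℝ _
  have hBΛ : (B : Set ℝ) ⊆ AddSubgroup.closure ((B : Set ℝ) - (B : Set ℝ)) := fun b hb => by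
    simpa using AddSubgroup.subset_closure (Set.sub_mem_sub hb hB0)
  have hsub := add_subset_add_left (s := A) (image_Iic_subset_kfold hB0 hB1 k)
  rw [← card_add_image_Iic hA h0 h1 k, Nat.cast_inj]
  constructor
  · intro hcard
    have heq := eq_of_subset_of_card_le hsub hcard.le
    exact stable_of_add_subset hA h0 h1
      ((add_subset_add_left (subset_kfold hB0 hk)).trans heq.symm.subset)
  · intro hstab
    rw [subset_antisymm hsub (add_kfold_subset_of_stable hA hB01 hBΛ (hBΛ hB1) hstab k)]
end

section
/- Let B ⊆ ℝ be finite with conv(B) = [0,1] and let C ⊆ (0,1) be finite. Then for every k ≥ 1, |C + kB| ≥ (k+1)|C|, with equality if and only if (C + Λ(B)) ∩ [0,1] = C, where Λ(B) is the subgroup of ℝ generated by B - B. -/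
/-!
Since `conv B = [0,1]`, the extreme points `0` and `1` lie in `B`, so `kB` contains
`D = {0, 1, …, k}`; as `C ⊆ (0,1)`, the sums `c + j` (`c ∈ C`, `j ∈ D`) are distinct, whence
`|C + kB| ≥ |C + D| = (k+1)|C|`, with equality iff `C + kB ⊆ C + D`. Every point of `C + kB` lies
in `[0, k+1)`, and there membership in `C + D` just says that the residue mod `1` lies in the image
`T` of `C` in `ℝ/ℤ`. So equality holds iff `kB`, equivalently `B`, equivalently `Λ(B)`, lies in the
stabilizer of `T` (a translation mapping the finite set `T` into itself maps it onto itself);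
since `1 ∈ Λ(B)`, this is exactly `(C + Λ(B)) ∩ [0,1] = C`.
-/

open Finset Pointwise

theorem kfold_eq_nsmul {E : Type*} [DecidableEq E] [AddMonoid E] (n : ℕ) (A : Finset E) :
    kfold n A = n • A := by
  induction n with
  | zero => rfl
  | succ n ih => rw [kfold, ih, succ_nsmul]

theorem Set.nsmul_subset_Icc {E : Type*} [AddCommMonoid E] [PartialOrder E] [IsOrderedAddMonoid E]
    {s : Set E} {a b : E} (h : s ⊆ Set.Icc a b) (n : ℕ) : n • s ⊆ Set.Icc (n • a) (n • b) := by
  induction n with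
  | zero => simp
  | succ n ih =>
    simp only [succ_nsmul]
    exact (Set.add_subset_add ih h).trans (Set.Icc_add_Icc_subset _ _ _ _)

theorem AddSubgroup.closure_sub_le_iff {G : Type*} [AddGroup G] {B : Set G} {H : AddSubgroup G}
    (h0 : (0 : G) ∈ B) : closure (B - B) ≤ H ↔ B ⊆ H := by
  refine ⟨fun h b hb => h (subset_closure ⟨b, hb, 0, h0, sub_zero b⟩), fun h => ?_⟩
  rw [closure_le]
  rintro _ ⟨a, ha, b, hb, rfl⟩
  exact H.sub_mem (h ha) (h hb)

theorem AddSubgroup.nsmul_subset_iff {G : Type*} [AddGroup G] {B : Set G} {H : AddSubgroup G}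
    (h0 : (0 : G) ∈ B) {n : ℕ} (hn : n ≠ 0) : n • B ⊆ H ↔ B ⊆ H :=
  ⟨(Set.subset_nsmul h0 hn).trans, nsmul_subset⟩

theorem pair_subset_of_convexHull_eq_Icc {B : Set ℝ} {a b : ℝ} (hab : a ≤ b)
    (hB : convexHull ℝ B = Set.Icc a b) : {a, b} ⊆ B := by
  rw [← Set.extremePoints_Icc hab, ← hB]
  exact extremePoints_convexHull_subset

theorem UnitAddCircle.eq_of_coe_eq {x y : ℝ} (h : (x : UnitAddCircle) = y) (hxy : |x - y| < 1) :
    x = y := by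
  obtain ⟨m, hm⟩ := (AddCircle.coe_eq_zero_iff (1 : ℝ) (x := x - y)).1
    (by rw [AddCircle.coe_sub, h, sub_self])
  rw [← hm, zsmul_one, ← Int.cast_abs, ← Int.cast_one, Int.cast_lt, Int.abs_lt_one_iff] at hxy
  rw [← sub_eq_zero, ← hm, hxy, zero_zsmul]

theorem UnitAddCircle.coe_add_natCast (x : ℝ) (j : ℕ) : ((x + j : ℝ) : UnitAddCircle) = x := by
  rw [AddCircle.coe_add, ← nsmul_one, AddCircle.coe_nsmul, AddCircle.coe_period, nsmul_zero,
    add_zero]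

noncomputable def natUpTo (n : ℕ) : Finset ℝ := (range (n + 1)).image (↑)

theorem mem_natUpTo {n : ℕ} {x : ℝ} : x ∈ natUpTo n ↔ ∃ j ≤ n, (j : ℝ) = x := by
  simp [natUpTo]

theorem natUpTo_subset_nsmul {B : Finset ℝ} (h0 : (0 : ℝ) ∈ B) (h1 : (1 : ℝ) ∈ B) (n : ℕ) :
    natUpTo n ⊆ n • B := by
  induction n with
  | zero => simp [natUpTo]
  | succ n ih =>
    intro x hx
    obtain ⟨j, hj, rfl⟩ := mem_natUpTo.1 hx
    rw [succ_nsmul]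
    rcases Nat.lt_or_ge j (n + 1) with hjn | hjn
    · simpa using add_mem_add (ih (mem_natUpTo.2 ⟨j, by omega, rfl⟩)) h0
    · obtain rfl : j = n + 1 := by omega
      simpa using add_mem_add (ih (mem_natUpTo.2 ⟨n, le_rfl, rfl⟩)) h1

variable {C : Finset ℝ}

theorem card_add_natUpTo (hC : (C : Set ℝ) ⊆ Set.Ico 0 1) (n : ℕ) :
    #(C + natUpTo n) = (n + 1) * #C := by
  have hinj : Set.InjOn (fun p : ℝ × ℝ => p.1 + p.2) (C ×ˢ natUpTo n : Set (ℝ × ℝ)) := by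
    rintro ⟨c₁, x₁⟩ ⟨hc₁, hx₁⟩ ⟨c₂, x₂⟩ ⟨hc₂, hx₂⟩ (h : c₁ + x₁ = c₂ + x₂)
    obtain ⟨j₁, -, rfl⟩ := mem_natUpTo.1 hx₁
    obtain ⟨j₂, -, rfl⟩ := mem_natUpTo.1 hx₂
    have hc : c₁ = c₂ := by
      rw [← AddCircle.coe_eq_coe_iff_of_mem_Ico (p := (1 : ℝ)) (a := 0)
        (by simpa using hC hc₁) (by simpa using hC hc₂), ← UnitAddCircle.coe_add_natCast c₁ j₁, h,
        UnitAddCircle.coe_add_natCast]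
    subst hc
    simp_all
  rw [card_add_iff.2 hinj, natUpTo, card_image_of_injective _ Nat.cast_injective, card_range,
    mul_comm]

theorem mem_add_natUpTo_iff (hC : (C : Set ℝ) ⊆ Set.Ico 0 1) {n : ℕ} {x : ℝ}
    (hx : x ∈ Set.Ico 0 ((n : ℝ) + 1)) :
    x ∈ C + natUpTo n ↔ (x : UnitAddCircle) ∈ ((↑) : ℝ → UnitAddCircle) '' C := by
  constructor
  · intro h
    obtain ⟨c, hc, _, hj, rfl⟩ := mem_add.1 h
    obtain ⟨j, -, rfl⟩ := mem_natUpTo.1 hj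
    exact ⟨c, hc, (UnitAddCircle.coe_add_natCast c j).symm⟩
  · rintro ⟨c, hc, hcx⟩
    have hfract : Int.fract x = c := by
      rw [← AddCircle.coe_eq_coe_iff_of_mem_Ico (p := (1 : ℝ)) (a := 0)
        (by rw [zero_add]; exact ⟨Int.fract_nonneg x, Int.fract_lt_one x⟩) (by simpa using hC hc),
        AddCircle.coe_fract, hcx]
    refine mem_add.2 ⟨c, hc, ⌊x⌋₊, mem_natUpTo.2 ⟨⌊x⌋₊, ?_, rfl⟩, ?_⟩
    · exact Nat.lt_succ_iff.1 ((Nat.floor_lt hx.1).2 (by exact_mod_cast hx.2))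
    · rw [← hfract, natCast_floor_eq_intCast_floor hx.1, Int.fract_add_floor]

noncomputable def modOneStabilizer (C : Finset ℝ) : AddSubgroup ℝ :=
  AddAction.stabilizer ℝ (((↑) : ℝ → UnitAddCircle) '' C)

theorem mem_modOneStabilizer {l : ℝ} :
    l ∈ modOneStabilizer C ↔
      ∀ c ∈ C, ((l + c : ℝ) : UnitAddCircle) ∈ ((↑) : ℝ → UnitAddCircle) '' C := by
  rw [modOneStabilizer, AddAction.mem_stabilizer_set' (C.finite_toSet.image _),
    Set.forall_mem_image]
  rfl

theorem add_subset_add_natUpTo_iff (hC : (C : Set ℝ) ⊆ Set.Ico 0 1) {S : Finset ℝ} {n : ℕ}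
    (hS : (S : Set ℝ) ⊆ Set.Icc 0 n) :
    C + S ⊆ C + natUpTo n ↔ (S : Set ℝ) ⊆ modOneStabilizer C := by
  have hrange : ∀ c ∈ C, ∀ s ∈ S, c + s ∈ Set.Ico 0 ((n : ℝ) + 1) := fun c hc s hs => by
    obtain ⟨hc0, hc1⟩ := hC hc
    obtain ⟨hs0, hs1⟩ := hS hs
    exact ⟨by linarith, by linarith⟩
  simp only [Set.subset_def, SetLike.mem_coe, mem_modOneStabilizer]
  constructor
  · intro h s hs c hc
    rw [add_comm, ← mem_add_natUpTo_iff hC (hrange c hc s hs)]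
    exact h (add_mem_add hc hs)
  · intro h x hx
    obtain ⟨c, hc, s, hs, rfl⟩ := mem_add.1 hx
    rw [mem_add_natUpTo_iff hC (hrange c hc s hs), add_comm]
    exact h s hs c hc

theorem le_modOneStabilizer_iff {Λ : AddSubgroup ℝ} (hΛ : (1 : ℝ) ∈ Λ)
    (hC : (C : Set ℝ) ⊆ Set.Ioo 0 1) :
    Λ ≤ modOneStabilizer C ↔ ((C : Set ℝ) + Λ) ∩ Set.Icc 0 1 = C := by
  simp only [SetLike.le_def, mem_modOneStabilizer]
  constructor
  · intro h
    refine subset_antisymm ?_ fun c hc => ⟨⟨c, hc, 0, Λ.zero_mem, add_zero c⟩,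
      Set.Ioo_subset_Icc_self (hC hc)⟩
    rintro _ ⟨⟨c, hc, l, hl, rfl⟩, hx⟩
    obtain ⟨c', hc', hcc'⟩ := h hl c hc
    obtain ⟨hc'0, hc'1⟩ := hC hc'
    have : c + l = c' := UnitAddCircle.eq_of_coe_eq (by rw [add_comm]; exact hcc'.symm)
      (abs_sub_lt_iff.2 ⟨by linarith [hx.2], by linarith [hx.1]⟩)
    show c + l ∈ (C : Set ℝ)
    rwa [this]
  · intro h l hl c hc
    refine ⟨Int.fract (l + c), ?_, AddCircle.coe_fract _⟩
    rw [← h]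
    refine ⟨⟨c, hc, l - ⌊l + c⌋, Λ.sub_mem hl ?_, ?_⟩, Int.fract_nonneg _, (Int.fract_lt_one _).le⟩
    · simpa using Λ.zsmul_mem hΛ ⌊l + c⌋
    · rw [Int.fract]; ring

/-- If `conv B = [0,1]` and `C ⊆ (0,1)` is finite, then `|C + kB| ≥ (k+1)|C|`,
with equality iff `C` is stable with respect to `B`. -/
theorem stmt_9 (B C : Finset ℝ)
    (hB : convexHull ℝ (B : Set ℝ) = Set.Icc 0 1)
    (hC : (C : Set ℝ) ⊆ Set.Ioo (0 : ℝ) 1)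
    (k : ℕ) (hk : 1 ≤ k) :
    (C + kfold k B).card ≥ (k + 1) * C.card ∧
      ((C + kfold k B).card = (k + 1) * C.card ↔
        ((C : Set ℝ) + (AddSubgroup.closure ((B : Set ℝ) - (B : Set ℝ)) : Set ℝ)) ∩
            Set.Icc (0 : ℝ) 1 = (C : Set ℝ)) := by
  obtain ⟨h0, h1⟩ := Set.pair_subset_iff.1 (pair_subset_of_convexHull_eq_Icc zero_le_one hB)
  have hBIcc : (B : Set ℝ) ⊆ Set.Icc 0 1 := hB ▸ subset_convexHull ℝ _
  have hkB : ((k • B : Finset ℝ) : Set ℝ) ⊆ Set.Icc 0 k := by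
    simpa [coe_nsmul] using Set.nsmul_subset_Icc hBIcc k
  have hCIco : (C : Set ℝ) ⊆ Set.Ico 0 1 := hC.trans Set.Ioo_subset_Ico_self
  have hsub : C + natUpTo k ⊆ C + k • B := add_subset_add_left (natUpTo_subset_nsmul h0 h1 k)
  have hcard := card_add_natUpTo hCIco k
  have h1Λ : (1 : ℝ) ∈ AddSubgroup.closure ((B : Set ℝ) - (B : Set ℝ)) :=
    AddSubgroup.subset_closure ⟨1, h1, 0, h0, sub_zero 1⟩
  rw [kfold_eq_nsmul, ← hcard]
  refine ⟨card_le_card hsub, ?_⟩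
  calc #(C + k • B) = #(C + natUpTo k) ↔ C + k • B ⊆ C + natUpTo k :=
        ⟨fun h => (eq_of_subset_of_card_le hsub h.le).ge, fun h => by rw [subset_antisymm h hsub]⟩
    _ ↔ ((k • B : Finset ℝ) : Set ℝ) ⊆ modOneStabilizer C := add_subset_add_natUpTo_iff hCIco hkB
    _ ↔ (B : Set ℝ) ⊆ modOneStabilizer C := by
        rw [coe_nsmul]; exact AddSubgroup.nsmul_subset_iff h0 (by omega)
    _ ↔ AddSubgroup.closure ((B : Set ℝ) - (B : Set ℝ)) ≤ modOneStabilizer C :=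
        (AddSubgroup.closure_sub_le_iff h0).symm
    _ ↔ _ := le_modOneStabilizer_iff h1Λ hC
end

section
/- Let A ⊆ ℝ^d be finite and d-dimensional, k ≥ 2, and suppose A consists of the vertices v₀, ..., v_d of a d-simplex together with an arithmetic progression contained in the edge [v₀, v_d] that starts at v₀ and ends at v_d. Then |kA| = C(d+k-1, k-1)·|A| - (k-1)·C(d+k-1, k). -/
/-!
Translate `v₀` to the origin and put `eᵢ = vᵢ - v₀` for `0 < i < d`. Since `m • w = v_d - v₀`,
the vectors `e₁, …, e_{d-1}, w` are linearly independent, so `(c, t) ↦ ∑ cᵢ • eᵢ + t • w` is an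
injective additive map on `ℕ^(d-1) × ℕ`. It carries `S = {(δᵢ, 0)} ∪ {(0, j) : j ≤ m}` (the `δᵢ`
being the unit vectors) onto `A - v₀`, hence `|kA| = |kS|`. Now `kS` is the set of all lattice
points of the `k`-th dilate of `conv S`, namely `{(c, t) : ∑ c ≤ k, t ≤ (k - ∑ c) m}`. Slicing by
one coordinate and Pascal's rule count it as `C(k+d-1, d-1) + m C(k+d-1, d)`, which is the claimed
expression.
-/

open Finset Pointwise

section Kfold

variable {M : Type*} [DecidableEq M] [AddCommMonoid M]

lemma kfold_one (A : Finset M) : kfold 1 A = A :=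
  zero_add A

lemma kfold_singleton_add (a : M) (A : Finset M) (n : ℕ) :
    kfold n ({a} + A) = {n • a} + kfold n A := by
  induction n with
  | zero => simp [kfold]
  | succ n ih => rw [kfold, kfold, ih, add_add_add_comm, singleton_add_singleton, succ_nsmul]

lemma kfold_image {N : Type*} [DecidableEq N] [AddCommMonoid N] (f : M →+ N) (A : Finset M)
    (n : ℕ) : kfold n (A.image f) = (kfold n A).image f := by
  induction n with
  | zero => simp [kfold]
  | succ n ih => rw [kfold, kfold, ih, image_add]

end Kfold

lemma sum_add_single_one {ι : Type*} [Fintype ι] [DecidableEq ι] (c : ι → ℕ) (i : ι) :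
    ∑ j, (c + Pi.single i 1 : ι → ℕ) j = ∑ j, c j + 1 := by
  simp [sum_add_distrib]

lemma sum_range_choose_add_mul_choose (D m n : ℕ) :
    ∑ x ∈ range (n + 1), ((x + D).choose D + m * (x + D).choose (D + 1)) =
      (n + (D + 1)).choose (D + 1) + m * (n + (D + 1)).choose (D + 2) := by
  induction n with
  | zero => simp
  | succ n ih =>
    rw [sum_range_succ, ih, show n + 1 + (D + 1) = n + 1 + D + 1 by ring,
      Nat.choose_succ_succ' (n + 1 + D) (D + 1), Nat.choose_succ_succ' (n + 1 + D) D]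
    ring_nf

section Lattice

variable (D m : ℕ)

def simplexEdgeAP : Finset ((Fin D → ℕ) × ℕ) :=
  univ.image (fun i => (Pi.single i 1, 0)) ∪ (range (m + 1)).image (fun j => (0, j))

def dilatedSimplexPoints (n : ℕ) : Finset ((Fin D → ℕ) × ℕ) :=
  ((Fintype.piFinset fun _ => range (n + 1)) ×ˢ range (n * m + 1)).filter
    fun p => ∑ i, p.1 i ≤ n ∧ p.2 ≤ (n - ∑ i, p.1 i) * m

variable {D m}

@[simp]
lemma mem_dilatedSimplexPoints {n : ℕ} {p : (Fin D → ℕ) × ℕ} :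
    p ∈ dilatedSimplexPoints D m n ↔ ∑ i, p.1 i ≤ n ∧ p.2 ≤ (n - ∑ i, p.1 i) * m := by
  refine ⟨fun h => (mem_filter.1 h).2, fun h => mem_filter.2 ⟨?_, h⟩⟩
  simp only [mem_product, Fintype.mem_piFinset, mem_range, Nat.lt_succ_iff]
  exact ⟨fun i => (single_le_sum (fun _ _ => Nat.zero_le _) (mem_univ i)).trans h.1,
    h.2.trans (Nat.mul_le_mul_right m (Nat.sub_le n _))⟩

lemma dilatedSimplexPoints_zero : dilatedSimplexPoints D m 0 = {0} := by
  ext ⟨c, t⟩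
  simp [funext_iff]

lemma dilatedSimplexPoints_add_simplexEdgeAP_subset (n : ℕ) :
    dilatedSimplexPoints D m n + simplexEdgeAP D m ⊆ dilatedSimplexPoints D m (n + 1) := by
  intro x hx
  obtain ⟨⟨c, t⟩, hp, s, hs, rfl⟩ := mem_add.1 hx
  simp only [mem_dilatedSimplexPoints] at hp
  simp only [simplexEdgeAP, mem_union, mem_image, mem_univ, true_and, mem_range] at hs
  rcases hs with ⟨i, rfl⟩ | ⟨j, hj, rfl⟩
  · simp only [mem_dilatedSimplexPoints, Prod.fst_add, Prod.snd_add, add_zero, sum_add_single_one]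
    exact ⟨by omega, by simpa using hp.2⟩
  · simp only [mem_dilatedSimplexPoints, Prod.fst_add, Prod.snd_add, add_zero]
    refine ⟨by omega, ?_⟩
    rw [Nat.sub_add_comm hp.1, Nat.succ_mul]
    exact Nat.add_le_add hp.2 (by omega)

lemma dilatedSimplexPoints_succ_subset (n : ℕ) :
    dilatedSimplexPoints D m (n + 1) ⊆ dilatedSimplexPoints D m n + simplexEdgeAP D m := by
  rintro ⟨c, t⟩ hp
  simp only [mem_dilatedSimplexPoints] at hp
  by_cases hc : c = 0
  · subst hc
    simp only [Pi.zero_apply, sum_const_zero, Nat.sub_zero, Nat.succ_mul] at hp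
    refine mem_add.2 ⟨(0, t - min t m), ?_, (0, min t m), ?_, by simp⟩
    · simp only [mem_dilatedSimplexPoints, Pi.zero_apply, sum_const_zero, Nat.sub_zero]
      omega
    · exact mem_union_right _ (mem_image.2 ⟨min t m, by simp, rfl⟩)
  · obtain ⟨i, hi⟩ := Function.ne_iff.1 hc
    have hle : Pi.single i 1 ≤ c := by
      intro j
      by_cases hj : j = i
      · subst hj; simpa [Nat.one_le_iff_ne_zero] using hi
      · simp [hj]
    have hsum := sum_add_single_one (c - Pi.single i 1) i
    rw [tsub_add_cancel_of_le hle] at hsum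
    refine mem_add.2 ⟨(c - Pi.single i 1, t), ?_, (Pi.single i 1, 0), ?_, ?_⟩
    · simp only [mem_dilatedSimplexPoints]
      refine ⟨by omega, ?_⟩
      rw [show n - ∑ j, (c - Pi.single i 1 : Fin D → ℕ) j = n + 1 - ∑ j, c j by omega]
      exact hp.2
    · exact mem_union_left _ (mem_image_of_mem _ (mem_univ i))
    · simp [tsub_add_cancel_of_le hle]

lemma kfold_simplexEdgeAP (n : ℕ) : kfold n (simplexEdgeAP D m) = dilatedSimplexPoints D m n := by
  induction n with
  | zero => exact dilatedSimplexPoints_zero.symm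
  | succ n ih =>
    rw [kfold, ih]
    exact (dilatedSimplexPoints_add_simplexEdgeAP_subset n).antisymm
      (dilatedSimplexPoints_succ_subset n)

lemma card_dilatedSimplexPoints_zero_dim (n : ℕ) :
    #(dilatedSimplexPoints 0 m n) = n * m + 1 := by
  have : dilatedSimplexPoints 0 m n = {0} ×ˢ range (n * m + 1) := by
    ext ⟨c, t⟩
    simp [Subsingleton.elim c 0]
  rw [this, card_product, card_singleton, card_range, one_mul]

lemma card_dilatedSimplexPoints_succ_dim (n : ℕ) :
    #(dilatedSimplexPoints (D + 1) m n) =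
      ∑ x ∈ range (n + 1), #(dilatedSimplexPoints D m (n - x)) := by
  have hmaps : ∀ p ∈ dilatedSimplexPoints (D + 1) m n, p.1 0 ∈ range (n + 1) := by
    intro p hp
    rw [mem_dilatedSimplexPoints, Fin.sum_univ_succ] at hp
    rw [mem_range]
    omega
  rw [card_eq_sum_card_fiberwise hmaps]
  refine sum_congr rfl fun x hx => ?_
  rw [mem_range] at hx
  refine card_nbij' (fun p => (Fin.tail p.1, p.2)) (fun q => (Fin.cons x q.1, q.2)) ?_ ?_ ?_ ?_
  · rintro ⟨c, t⟩ hp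
    simp only [mem_coe, mem_filter, mem_dilatedSimplexPoints, Fin.sum_univ_succ] at hp ⊢
    obtain ⟨⟨h1, h2⟩, rfl⟩ := hp
    refine ⟨by simp only [Fin.tail]; omega, ?_⟩
    rwa [Nat.sub_sub]
  · rintro ⟨c, t⟩ hq
    simp only [mem_coe, mem_filter, mem_dilatedSimplexPoints, Fin.sum_univ_succ,
      Fin.cons_zero, Fin.cons_succ, and_true] at hq ⊢
    rw [Nat.sub_sub] at hq
    exact ⟨by omega, hq.2⟩
  · rintro ⟨c, t⟩ hp
    simp only [mem_coe, mem_filter] at hp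
    simp [← hp.2]
  · rintro ⟨c, t⟩ -
    simp

lemma card_dilatedSimplexPoints (D n : ℕ) :
    #(dilatedSimplexPoints D m n) = (n + D).choose D + m * (n + D).choose (D + 1) := by
  induction D generalizing n with
  | zero => simp [card_dilatedSimplexPoints_zero_dim, mul_comm, add_comm]
  | succ D ih =>
    rw [card_dilatedSimplexPoints_succ_dim, sum_congr rfl fun x _ => ih (n - x),
      ← sum_range_choose_add_mul_choose]
    simpa only [Nat.add_sub_cancel] using
      sum_range_reflect (fun x => (x + D).choose D + m * (x + D).choose (D + 1)) (n + 1)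

end Lattice

lemma choose_add_mul_choose_eq (D K m : ℕ) :
    ((D + K + 1).choose D + m * (D + K + 1).choose (D + 1) : ℤ) =
      (D + K + 1).choose K * (D + 1 + m) - K * (D + K + 1).choose (K + 1) := by
  have hK : (D + K + 1).choose K = (D + K + 1).choose (D + 1) :=
    Nat.choose_symm_of_eq_add (by ring)
  have hK1 : (D + K + 1).choose (K + 1) = (D + K + 1).choose D :=
    Nat.choose_symm_of_eq_add (by ring)
  have hpascal : ((D + K + 1).choose (D + 1) * (D + 1) : ℤ) = (D + K + 1).choose D * (K + 1) := by
    have := (D + K + 1).choose_succ_right_eq D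
    rw [show D + K + 1 - D = K + 1 by omega] at this
    exact_mod_cast this
  rw [hK, hK1]
  linear_combination -hpascal

section Realization

variable {V : Type*} [AddCommGroup V] {D : ℕ}

def latticeMap (e : Fin D → V) (w : V) : (Fin D → ℕ) × ℕ →+ V where
  toFun p := ∑ i, p.1 i • e i + p.2 • w
  map_zero' := by simp
  map_add' p q := by
    simp only [Prod.fst_add, Prod.snd_add, Pi.add_apply, add_smul, sum_add_distrib]
    abel

@[simp]
lemma latticeMap_apply (e : Fin D → V) (w : V) (p : (Fin D → ℕ) × ℕ) :
    latticeMap e w p = ∑ i, p.1 i • e i + p.2 • w :=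
  rfl

variable [Module ℝ V]

lemma latticeMap_injective {e : Fin D → V} {w : V}
    (h : LinearIndependent ℝ (Fin.snoc e w : Fin (D + 1) → V)) :
    Function.Injective (latticeMap e w) := by
  have hℕ := linearIndependent_iff_injective_fintypeLinearCombination.1
    (h.restrict_scalars' ℕ)
  intro p q hpq
  have hsnoc : Fin.snoc (α := fun _ => ℕ) p.1 p.2 = Fin.snoc q.1 q.2 := by
    apply hℕ
    simpa [Fintype.linearCombination_apply, Fin.sum_univ_castSucc] using hpq
  obtain ⟨h1, h2⟩ := Fin.snoc_injective2 hsnoc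
  exact Prod.ext h1 h2

variable {v : Fin (D + 2) → V} {w : V} {m : ℕ}

lemma linearIndependent_snoc_edge (hv : AffineIndependent ℝ v) (hm : m ≠ 0)
    (hw : v 0 + (m : ℝ) • w = v (Fin.last _)) :
    LinearIndependent ℝ (Fin.snoc (fun q : Fin D => v q.castSucc.succ - v 0) w) := by
  have hsucc : LinearIndependent ℝ fun i : Fin (D + 1) => v i.succ - v 0 := by
    have := ((affineIndependent_iff_linearIndependent_vsub ℝ v 0).1 hv).comp
      (fun i => ⟨i.succ, i.succ_ne_zero⟩) fun i j hij =>
        Fin.succ_injective _ (congrArg Subtype.val hij)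
    simpa [Function.comp_def] using this
  have hm' : (m : ℝ) ≠ 0 := Nat.cast_ne_zero.2 hm
  convert hsucc.units_smul
    (Fin.snoc (α := fun _ => ℝˣ) 1 (Units.mk0 _ (inv_ne_zero hm'))) using 1
  funext i
  induction i using Fin.lastCases with
  | last => simp [Fin.succ_last, ← hw, smul_smul, inv_mul_cancel₀ hm']
  | cast q => simp

lemma image_vertices_union_edgeAP [DecidableEq V] (hw : v 0 + (m : ℝ) • w = v (Fin.last _)) :
    univ.image v ∪ (range (m + 1)).image (fun j : ℕ => v 0 + (j : ℝ) • w) =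
      {v 0} + (simplexEdgeAP D m).image (latticeMap (fun q => v q.castSucc.succ - v 0) w) := by
  ext x
  simp only [mem_union, mem_image, mem_univ, true_and, mem_range, singleton_add, simplexEdgeAP,
    image_union, image_image, mem_vadd_finset, Function.comp_def, latticeMap_apply, vadd_eq_add,
    Pi.single_apply, ite_smul, one_smul, zero_smul, sum_ite_eq', if_true, add_zero,
    Nat.cast_smul_eq_nsmul, Pi.zero_apply, sum_const_zero, zero_add, Nat.lt_succ_iff]
  rw [Nat.cast_smul_eq_nsmul] at hw
  constructor
  · rintro (⟨i, rfl⟩ | ⟨j, hj, rfl⟩)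
    · induction i using Fin.cases with
      | zero => exact ⟨0, Or.inr ⟨0, Nat.zero_le m, zero_smul ℕ w⟩, add_zero _⟩
      | succ i =>
        induction i using Fin.lastCases with
        | last => exact ⟨m • w, Or.inr ⟨m, le_rfl, rfl⟩, by rw [hw, Fin.succ_last]⟩
        | cast q => exact ⟨_, Or.inl ⟨q, rfl⟩, add_sub_cancel _ _⟩
    · exact ⟨_, Or.inr ⟨j, hj, rfl⟩, rfl⟩
  · rintro ⟨_, ⟨q, rfl⟩ | ⟨j, hj, rfl⟩, rfl⟩
    · exact Or.inl ⟨_, (add_sub_cancel _ _).symm⟩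
    · exact Or.inr ⟨j, hj, rfl⟩

end Realization

/-- If `A` consists of the vertices of a `d`-simplex together with an
arithmetic progression along the edge `[v₀, v_d]` starting at `v₀` and ending
at `v_d`, then equality holds in the Freiman–Matolcsi–Ruzsa inequality. -/
theorem stmt_16 (d k : ℕ) (hd : 1 ≤ d) (hk : 2 ≤ k)
    (v : Fin (d + 1) → (Fin d → ℝ)) (hv : AffineIndependent ℝ v)
    (w : Fin d → ℝ) (m : ℕ) (hm : 1 ≤ m)
    (hw : v 0 + (m : ℝ) • w = v (Fin.last d))
    (A : Finset (Fin d → ℝ))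
    (hA : A = Finset.image v Finset.univ ∪
      Finset.image (fun j : ℕ => v 0 + (j : ℝ) • w) (Finset.range (m + 1))) :
    ((kfold k A).card : ℤ) =
      (d + k - 1).choose (k - 1) * A.card - ((k : ℤ) - 1) * (d + k - 1).choose k := by
  obtain ⟨D, rfl⟩ : ∃ D, d = D + 1 := ⟨d - 1, by omega⟩
  obtain ⟨K, rfl⟩ : ∃ K, k = K + 1 := ⟨k - 1, by omega⟩
  have hφ := latticeMap_injective (linearIndependent_snoc_edge hv (by omega) hw)
  rw [image_vertices_union_edgeAP hw] at hA
  have hcard (n : ℕ) : #(kfold n A) = #(dilatedSimplexPoints D m n) := by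
    rw [hA, kfold_singleton_add, kfold_image, kfold_simplexEdgeAP, card_singleton_add,
      card_image_of_injective _ hφ]
  have hA1 := hcard 1
  rw [kfold_one] at hA1
  rw [hcard, hA1, card_dilatedSimplexPoints, card_dilatedSimplexPoints, add_comm 1 D,
    Nat.choose_succ_self_right, Nat.choose_self, show K + 1 + D = D + K + 1 by ring,
    show D + 1 + (K + 1) - 1 = D + K + 1 by omega, Nat.add_sub_cancel]
  push_cast
  simpa using choose_add_mul_choose_eq D K m
end

section
/- Let A ⊆ ℝ² consist of the three vertices of a triangle together with the midpoints of its three sides (so |A| = 6). Then for every k ≥ 2, |kA| = C(k+1, k-1)·6 - (k-1)·C(k+1, k); equivalently |kA| = 2k² + 3k + 1. -/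
open Finset Pointwise

lemma Multiset.sum_map_eq_sum_count {ι M : Type*} [Fintype ι] [DecidableEq ι] [AddCommMonoid M]
    (v : ι → M) (s : Multiset ι) : (s.map v).sum = ∑ i, s.count i • v i := by
  rw [Finset.sum_multiset_map_count]
  exact Finset.sum_subset (subset_univ _) fun i _ hi => by
    simp [Multiset.count_eq_zero.2 (by simpa using hi)]

lemma Multiset.exists_le_card_eq {α : Type*} {s : Multiset α} {m : ℕ}
    (h : m ≤ Multiset.card s) : ∃ t ≤ s, Multiset.card t = m := by
  have hpos : 0 < Multiset.card (Multiset.powersetCard m s) := by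
    simpa using Nat.choose_pos h
  obtain ⟨t, ht⟩ := Multiset.card_pos_iff_exists_mem.1 hpos
  exact ⟨t, Multiset.mem_powersetCard.1 ht⟩

section HalfSum

variable {ι E : Type*} [AddCommGroup E] [Module ℝ E]

noncomputable def halfSum (v : ι → E) (s : Multiset ι) : E := (2 : ℝ)⁻¹ • (s.map v).sum

lemma halfSum_zero (v : ι → E) : halfSum v 0 = 0 := by
  simp [halfSum]

lemma halfSum_add (v : ι → E) (s t : Multiset ι) :
    halfSum v (s + t) = halfSum v s + halfSum v t := by
  simp [halfSum, smul_add]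

lemma halfSum_pair (v : ι → E) (i j : ι) : halfSum v {i, j} = midpoint ℝ (v i) (v j) := by
  simp [halfSum, midpoint_eq_smul_add]

lemma AffineIndependent.eq_of_halfSum_eq [Finite ι] {v : ι → E} (hv : AffineIndependent ℝ v)
    {s t : Multiset ι} (hst : Multiset.card s = Multiset.card t)
    (h : halfSum v s = halfSum v t) : s = t := by
  classical
  have := Fintype.ofFinite ι
  have hweights : ∑ i, (s.count i : ℝ) = ∑ i, (t.count i : ℝ) := by
    exact_mod_cast (by simpa using hst)
  have hsum : (s.map v).sum = (t.map v).sum := by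
    simpa [halfSum] using h
  rw [Multiset.sum_map_eq_sum_count, Multiset.sum_map_eq_sum_count] at hsum
  have hcount := hv.eq_of_sum_eq_sum hweights (by simpa [Nat.cast_smul_eq_nsmul] using hsum)
  ext i
  exact_mod_cast hcount i (mem_univ i)

variable [Fintype ι] [DecidableEq ι] [DecidableEq E]

noncomputable def halfSums (v : ι → E) (n : ℕ) : Finset E :=
  univ.image fun s : Sym ι n => halfSum v s

lemma mem_halfSums {v : ι → E} {n : ℕ} {x : E} :
    x ∈ halfSums v n ↔ ∃ s : Multiset ι, Multiset.card s = n ∧ halfSum v s = x := by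
  simp only [halfSums, mem_image, mem_univ, true_and]
  exact ⟨fun ⟨s, hs⟩ => ⟨s, s.2, hs⟩, fun ⟨s, hs, hx⟩ => ⟨⟨s, hs⟩, hx⟩⟩

lemma halfSums_zero (v : ι → E) : halfSums v 0 = {0} := by
  ext x
  simp [mem_halfSums, halfSum_zero, eq_comm]

lemma halfSums_two (v : ι → E) :
    halfSums v 2 = (univ ×ˢ univ).image fun p : ι × ι => midpoint ℝ (v p.1) (v p.2) := by
  ext x
  simp only [mem_halfSums, Multiset.card_eq_two, mem_image, mem_product, mem_univ, true_and,
    Prod.exists]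
  constructor
  · rintro ⟨s, ⟨i, j, rfl⟩, rfl⟩
    exact ⟨i, j, (halfSum_pair v i j).symm⟩
  · rintro ⟨i, j, rfl⟩
    exact ⟨{i, j}, ⟨i, j, rfl⟩, halfSum_pair v i j⟩

lemma halfSums_add (v : ι → E) (m n : ℕ) :
    halfSums v m + halfSums v n = halfSums v (m + n) := by
  ext x
  simp only [mem_add, mem_halfSums]
  constructor
  · rintro ⟨_, ⟨s, hs, rfl⟩, _, ⟨t, ht, rfl⟩, rfl⟩
    exact ⟨s + t, by simp [hs, ht], halfSum_add v s t⟩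
  · rintro ⟨u, hu, rfl⟩
    obtain ⟨s, hsu, hs⟩ := Multiset.exists_le_card_eq (s := u) (m := m) (by omega)
    refine ⟨_, ⟨s, hs, rfl⟩, _, ⟨u - s, ?_, rfl⟩, ?_⟩
    · rw [Multiset.card_sub hsu]; omega
    · rw [← halfSum_add, add_tsub_cancel_of_le hsu]

lemma kfold_halfSums_two (v : ι → E) (k : ℕ) :
    kfold k (halfSums v 2) = halfSums v (2 * k) := by
  induction k with
  | zero => exact (halfSums_zero v).symm
  | succ k ih => rw [kfold, ih, halfSums_add, Nat.mul_succ]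

lemma AffineIndependent.card_halfSums {v : ι → E} (hv : AffineIndependent ℝ v) (n : ℕ) :
    #(halfSums v n) = (Fintype.card ι + n - 1).choose n := by
  have hinj : Function.Injective fun s : Sym ι n => halfSum v s :=
    fun s t h => Sym.coe_injective (hv.eq_of_halfSum_eq (by simp) h)
  rw [halfSums, card_image_of_injective _ hinj, card_univ, Sym.card_sym_eq_choose]

end HalfSum

lemma midpoints_fin_three {E : Type*} [AddCommGroup E] [Module ℝ E] [DecidableEq E]
    (v : Fin 3 → E) :
    (univ ×ˢ univ).image (fun p : Fin 3 × Fin 3 => midpoint ℝ (v p.1) (v p.2)) =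
      {v 0, v 1, v 2, midpoint ℝ (v 0) (v 1), midpoint ℝ (v 1) (v 2),
        midpoint ℝ (v 0) (v 2)} := by
  ext x
  simp only [univ_product_univ, mem_image, mem_univ, eq_comm, true_and, Prod.exists,
    Fin.exists_fin_succ, Fin.isValue, Fin.succ_zero_eq_one, Fin.succ_one_eq_two,
    IsEmpty.exists_iff, or_false, midpoint_self, midpoint_comm (v 1) (v 0),
    midpoint_comm (v 2) (v 0), midpoint_comm (v 2) (v 1), mem_insert, mem_singleton]
  tauto

lemma choose_two_mul_add_two (k : ℕ) : (2 * k + 2).choose (2 * k) = 2 * k ^ 2 + 3 * k + 1 := by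
  rw [Nat.choose_symm_add, Nat.choose_two_right,
    show (2 * k + 2) * (2 * k + 2 - 1) = 2 * (2 * k ^ 2 + 3 * k + 1) by
      rw [show 2 * k + 2 - 1 = 2 * k + 1 by omega]; ring]
  exact Nat.mul_div_cancel_left _ two_pos

lemma succ_choose_pred_mul_six_sub {k : ℕ} (hk : 1 ≤ k) :
    ((k + 1).choose (k - 1) * 6 - ((k : ℤ) - 1) * (k + 1).choose k : ℤ) =
      2 * k ^ 2 + 3 * k + 1 := by
  obtain ⟨j, rfl⟩ := Nat.exists_eq_add_of_le' hk
  have h2 : ((j + 2).choose 2 : ℤ) * 2 = (j + 2) * (j + 1) := by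
    have := Nat.add_one_mul_choose_eq (j + 1) 1
    rw [Nat.choose_one_right] at this
    exact_mod_cast this.symm
  rw [Nat.add_sub_cancel, Nat.choose_succ_self_right, show j + 1 + 1 = j + 2 from rfl,
    Nat.choose_symm_add]
  push_cast
  linear_combination 3 * h2

/-- If `A` consists of the vertices of a nondegenerate triangle in `ℝ²`
together with the midpoints of its three sides, then for every `k ≥ 2`,
`|kA| = C(k+1,k-1)·6 - (k-1)·C(k+1,k) = 2k² + 3k + 1`. -/
theorem stmt_17 (v : Fin 3 → (Fin 2 → ℝ)) (hv : AffineIndependent ℝ v)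
    (A : Finset (Fin 2 → ℝ))
    (hA : A = {v 0, v 1, v 2, midpoint ℝ (v 0) (v 1), midpoint ℝ (v 1) (v 2),
      midpoint ℝ (v 0) (v 2)})
    (k : ℕ) (hk : 2 ≤ k) :
    ((kfold k A).card : ℤ) =
        (k + 1).choose (k - 1) * 6 - ((k : ℤ) - 1) * (k + 1).choose k ∧
      (kfold k A).card = 2 * k ^ 2 + 3 * k + 1 := by
  have hcard : #(kfold k A) = 2 * k ^ 2 + 3 * k + 1 := by
    rw [hA, ← midpoints_fin_three, ← halfSums_two, kfold_halfSums_two, hv.card_halfSums,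
      Fintype.card_fin, show 3 + 2 * k - 1 = 2 * k + 2 by omega, choose_two_mul_add_two]
  refine ⟨?_, hcard⟩
  rw [hcard, succ_choose_pred_mul_six_sub (by omega)]
  push_cast
  ring
end
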